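/- arXiv:2103.10261 — 3 statements merged into one kernel-verified Lean document; each statement's English description precedes it below -/
import Mathlib

section
/- Let d ≥ 2 be a real number and let Φ₁, Φ₂ be Schwartz functions on ℝ. Then there exist nonnegative Schwartz functions Ψ₁ on ℝ and Ψ₂ on ℝ² such that for all x ∈ ℝ with |x| ≥ 1 and all c ∈ ℝ∖{0}: | ∫_{ℝ∖{0}} Φ₁(x/v) |v|^{−d} Φ₂(c − v) dv | ≤ Ψ₁(x/c) |c|^{−d} + Ψ₂(x, c); in particular the integral on the left converges absolutely. (Lemma 9.3(i) of the paper, archimedean case F = ℝ.) -/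
/-!
Split the integral at the ball `|v - c| ≤ |c| / 2`. On the ball `|v| ≍ |c|`, so
`|v| ^ (-d) ≤ 2 ^ d |c| ^ (-d)` and the rapid decay of `Φ₁` at `x / v` becomes rapid decay in
`x / c`; integrating `|Φ₂ (c - v)|` only costs a constant. Off the ball, `|c - v|` dominates both
`|c|` and `|v|`, and for `2 j ≥ d`, `|x| ≥ 1` one has
`|v| ^ (-d) (1 + x²) ^ j ≤ 2 ^ j (1 + v²) ^ j (1 + (x / v)²) ^ j`; so the decay of `Φ₁` and `Φ₂`
absorbs every polynomial weight and this part decays rapidly in `(x, c)`.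

Bounds `C k / (1 + t²) ^ k` holding for every `k` are dominated by one nonnegative Schwartz
function: mollify the envelope `⨅ k, 4 ^ k C k / (1 + t²) ^ k` by a bump of radius `1` (the
factor `4 ^ k` pays for `1 + y² ≤ 4 (1 + t²)` when `|y - t| ≤ 1`). Composing with
`(x, c) ↦ x² + c²` gives the majorant on `ℝ × ℝ`.
-/

open MeasureTheory Real Set Function Metric
open scoped ContDiff Convolution SchwartzMap

noncomputable section

namespace SchwartzMap

lemma exists_one_add_sq_pow_mul_norm_le {E F : Type*} [NormedAddCommGroup E] [NormedSpace ℝ E]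
    [NormedAddCommGroup F] [NormedSpace ℝ F] (f : 𝓢(E, F)) (k : ℕ) :
    ∃ D, 0 ≤ D ∧ ∀ x, (1 + ‖x‖ ^ 2) ^ k * ‖f x‖ ≤ D := by
  set D := 2 ^ (2 * k) * (Finset.Iic (2 * k, 0)).sup (fun m => SchwartzMap.seminorm ℝ m.1 m.2) f
  have hD : ∀ x, (1 + ‖x‖ ^ 2) ^ k * ‖f x‖ ≤ D := fun x => calc
    (1 + ‖x‖ ^ 2) ^ k * ‖f x‖ ≤ (1 + ‖x‖) ^ (2 * k) * ‖iteratedFDeriv ℝ 0 f x‖ := by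
      rw [norm_iteratedFDeriv_zero, pow_mul]
      gcongr
      nlinarith [norm_nonneg x]
    _ ≤ D := one_add_le_sup_seminorm_apply (m := (2 * k, 0)) le_rfl le_rfl f x
  exact ⟨D, (by positivity : (0 : ℝ) ≤ _).trans (hD 0), hD⟩

lemma integrable_one_add_sq_pow_mul_norm {F : Type*} [NormedAddCommGroup F] [NormedSpace ℝ F]
    (f : 𝓢(ℝ, F)) (k : ℕ) : Integrable fun x : ℝ => (1 + x ^ 2) ^ k * ‖f x‖ := by
  obtain ⟨D, -, hD⟩ := f.exists_one_add_sq_pow_mul_norm_le (k + 1)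
  refine (integrable_inv_one_add_sq.const_mul D).mono' (by fun_prop) (.of_forall fun x => ?_)
  rw [norm_of_nonneg (by positivity), ← div_eq_mul_inv, le_div_iff₀ (by positivity)]
  simpa [pow_succ, mul_comm, mul_assoc, mul_left_comm] using hD x

end SchwartzMap

lemma one_add_sq_add_le (a b : ℝ) : 1 + (a + b) ^ 2 ≤ 2 * ((1 + a ^ 2) * (1 + b ^ 2)) := by
  nlinarith [sq_nonneg (a - b), sq_nonneg (a * b)]

lemma HasCompactSupport.iterate_deriv {F : Type*} [NormedAddCommGroup F] [NormedSpace ℝ F]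
    {f : ℝ → F} (hf : HasCompactSupport f) (n : ℕ) : HasCompactSupport (deriv^[n] f) := by
  induction n with
  | zero => exact hf
  | succ n ih => rw [iterate_succ_apply']; exact ih.deriv

section SchwartzMajorant

open ContinuousLinearMap (lsmul)

variable {u ρ : ℝ → ℝ}

lemma iterate_deriv_convolution_right (hu : LocallyIntegrable u) (hρ : ContDiff ℝ ∞ ρ)
    (hρs : HasCompactSupport ρ) (n : ℕ) :
    deriv^[n] (u ⋆[lsmul ℝ ℝ] ρ) = u ⋆[lsmul ℝ ℝ] deriv^[n] ρ := by
  induction n with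
  | zero => rfl
  | succ n ih =>
    ext t
    rw [iterate_succ_apply', ih, iterate_succ_apply']
    exact ((hρs.iterate_deriv n).hasDerivAt_convolution_right _ hu
      ((hρ.iterate_deriv n).of_le (mod_cast le_top)) t).deriv

lemma one_add_sq_pow_mul_abs_convolution_le {g : ℝ → ℝ} {k : ℕ} {B : ℝ}
    (hu : ∀ y, (1 + y ^ 2) ^ k * |u y| ≤ B) (hg : Integrable fun s => (1 + s ^ 2) ^ k * |g s|)
    (t : ℝ) :
    (1 + t ^ 2) ^ k * |(u ⋆[lsmul ℝ ℝ] g) t| ≤ 2 ^ k * B * ∫ s, (1 + s ^ 2) ^ k * |g s| := by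
  have hB : 0 ≤ B := (by positivity : (0 : ℝ) ≤ _).trans (hu 0)
  have hpt : ∀ y, ‖(1 + t ^ 2) ^ k * (u y • g (t - y))‖ ≤
      2 ^ k * B * ((1 + (t - y) ^ 2) ^ k * |g (t - y)|) := fun y => by
    have hw : (1 + t ^ 2) ^ k ≤ 2 ^ k * ((1 + y ^ 2) ^ k * (1 + (t - y) ^ 2) ^ k) := by
      rw [← mul_pow, ← mul_pow]
      gcongr
      simpa using one_add_sq_add_le y (t - y)
    calc ‖(1 + t ^ 2) ^ k * (u y • g (t - y))‖ = (1 + t ^ 2) ^ k * |u y| * |g (t - y)| := by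
          rw [smul_eq_mul, norm_mul, norm_mul, norm_of_nonneg (by positivity), norm_eq_abs,
            norm_eq_abs, mul_assoc]
      _ ≤ 2 ^ k * ((1 + y ^ 2) ^ k * (1 + (t - y) ^ 2) ^ k) * |u y| * |g (t - y)| := by gcongr
      _ = 2 ^ k * ((1 + y ^ 2) ^ k * |u y|) * ((1 + (t - y) ^ 2) ^ k * |g (t - y)|) := by ring
      _ ≤ 2 ^ k * B * ((1 + (t - y) ^ 2) ^ k * |g (t - y)|) := by gcongr; exact hu y
  calc (1 + t ^ 2) ^ k * |(u ⋆[lsmul ℝ ℝ] g) t|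
      = ‖∫ y, (1 + t ^ 2) ^ k * (u y • g (t - y))‖ := by
        rw [integral_const_mul, norm_mul, norm_of_nonneg (by positivity), convolution_lsmul,
          norm_eq_abs]
    _ ≤ ∫ y, 2 ^ k * B * ((1 + (t - y) ^ 2) ^ k * |g (t - y)|) :=
        norm_integral_le_of_norm_le ((hg.comp_sub_left t).const_mul _) (.of_forall hpt)
    _ = 2 ^ k * B * ∫ s, (1 + s ^ 2) ^ k * |g s| := by
        rw [integral_const_mul, integral_sub_left_eq_self (fun s => (1 + s ^ 2) ^ k * |g s|)]

lemma integrable_of_one_add_sq_mul_abs_le (hu_meas : AEStronglyMeasurable u) {B : ℝ}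
    (hu : ∀ y, (1 + y ^ 2) * |u y| ≤ B) : Integrable u := by
  refine (integrable_inv_one_add_sq.const_mul B).mono' hu_meas (.of_forall fun y => ?_)
  rw [norm_eq_abs, ← div_eq_mul_inv, le_div_iff₀ (by positivity), mul_comm]
  exact hu y

lemma exists_schwartzMap_eq_convolution (hloc : LocallyIntegrable u)
    (hu : ∀ k : ℕ, ∃ B, ∀ y, (1 + y ^ 2) ^ k * |u y| ≤ B) (hρ : ContDiff ℝ ∞ ρ)
    (hρs : HasCompactSupport ρ) : ∃ ψ : 𝓢(ℝ, ℝ), ⇑ψ = u ⋆[lsmul ℝ ℝ] ρ := by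
  refine ⟨⟨u ⋆[lsmul ℝ ℝ] ρ, hρs.contDiff_convolution_right _ hloc hρ, fun k n => ?_⟩, rfl⟩
  obtain ⟨B, hB⟩ := hu k
  refine ⟨2 ^ k * B * ∫ s, (1 + s ^ 2) ^ k * |deriv^[n] ρ s|, fun t => ?_⟩
  have hg : Integrable fun s => (1 + s ^ 2) ^ k * |deriv^[n] ρ s| := by
    have := (hρ.iterate_deriv n).continuous
    exact Continuous.integrable_of_hasCompactSupport (by fun_prop)
      (hρs.iterate_deriv n).norm.mul_left
  rw [norm_iteratedFDeriv_eq_norm_iteratedDeriv, iteratedDeriv_eq_iterate,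
    iterate_deriv_convolution_right hloc hρ hρs, norm_eq_abs, norm_eq_abs]
  refine le_trans ?_ (one_add_sq_pow_mul_abs_convolution_le hB hg t)
  gcongr
  nlinarith [sq_nonneg (|t| - 1), sq_abs t]

lemma exists_rapidDecay_envelope (C : ℕ → ℝ) :
    ∃ u : ℝ → ℝ, Measurable u ∧ (∀ y, 0 ≤ u y) ∧
      (∀ k y, (1 + y ^ 2) ^ k * |u y| ≤ 4 ^ k * max (C k) 0) ∧
      ∀ r t y, (∀ k, r ≤ C k / (1 + t ^ 2) ^ k) → |t - y| ≤ 1 → r ≤ u y := by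
  set u : ℝ → ℝ := fun y => ⨅ k, 4 ^ k * max (C k) 0 / (1 + y ^ 2) ^ k
  have hbdd : ∀ y, BddBelow (range fun k => 4 ^ k * max (C k) 0 / (1 + y ^ 2) ^ k) := fun y =>
    ⟨0, by rintro _ ⟨k, rfl⟩; positivity⟩
  have hu0 : ∀ y, 0 ≤ u y := fun y => le_ciInf fun k => by positivity
  refine ⟨u, Measurable.iInf fun k => by fun_prop, hu0, fun k y => ?_, fun r t y hr hty => ?_⟩
  · rw [abs_of_nonneg (hu0 y), mul_comm, ← le_div_iff₀ (by positivity)]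
    exact ciInf_le (hbdd y) k
  have hy : 1 + y ^ 2 ≤ 4 * (1 + t ^ 2) := by
    have h1 : (y - t) ^ 2 ≤ 1 := by
      rw [← sq_abs, abs_sub_comm]
      nlinarith [abs_nonneg (t - y)]
    have := one_add_sq_add_le t (y - t)
    rw [add_sub_cancel] at this
    nlinarith
  refine le_ciInf fun k => (hr k).trans ?_
  rw [div_le_div_iff₀ (by positivity) (by positivity), mul_comm (4 ^ k), mul_assoc, ← mul_pow]
  gcongr
  exact le_max_left _ _

lemma exists_schwartzMap_majorant (C : ℕ → ℝ) :
    ∃ ψ : 𝓢(ℝ, ℝ), (∀ t, 0 ≤ ψ t) ∧ ∀ r t, (∀ k, r ≤ C k / (1 + t ^ 2) ^ k) → r ≤ ψ t := by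
  obtain ⟨u, hu_meas, hu0, hu, hru⟩ := exists_rapidDecay_envelope C
  let b : ContDiffBump (0 : ℝ) := ⟨1 / 2, 1, by norm_num, by norm_num⟩
  set ρ := b.normed volume
  have hρ : ContDiff ℝ ∞ ρ := b.contDiff_normed
  have hρs : HasCompactSupport ρ := b.hasCompactSupport_normed
  have hρ0 : ∀ y, 0 ≤ ρ y := b.nonneg_normed
  have hloc : LocallyIntegrable u := (integrable_of_one_add_sq_mul_abs_le
    hu_meas.aestronglyMeasurable (by simpa using hu 1)).locallyIntegrable
  obtain ⟨ψ, hψ⟩ := exists_schwartzMap_eq_convolution hloc (fun k => ⟨_, hu k⟩) hρ hρs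
  refine ⟨ψ, fun t => ?_, fun r t hr => ?_⟩
  · rw [hψ, convolution_lsmul]
    exact integral_nonneg fun y => mul_nonneg (hu0 y) (hρ0 _)
  have hpt : ∀ y, r * ρ (t - y) ≤ u y • ρ (t - y) := fun y => by
    rcases eq_or_ne (ρ (t - y)) 0 with h0 | h0
    · simp [h0]
    have hty : |t - y| < 1 := by simpa [b.support_normed_eq, ρ] using mem_support.mpr h0
    exact mul_le_mul_of_nonneg_right (hru r t y hr hty.le) (hρ0 _)
  calc r = ∫ y, r * ρ (t - y) := by
        rw [integral_const_mul, integral_sub_left_eq_self ρ, b.integral_normed, mul_one]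
    _ ≤ ∫ y, u y • ρ (t - y) :=
        integral_mono ((b.integrable_normed.comp_sub_left t).const_mul r)
          (hρs.convolutionExists_right (lsmul ℝ ℝ) hloc hρ.continuous t) hpt
    _ = ψ t := by rw [hψ, convolution_lsmul]

lemma exists_schwartzMap_majorant_prod (C : ℕ → ℝ) :
    ∃ Ψ : 𝓢(ℝ × ℝ, ℝ), (∀ p, 0 ≤ Ψ p) ∧
      ∀ r x y, (∀ k, r ≤ C k / (1 + x ^ 2 + y ^ 2) ^ k) → r ≤ Ψ (x, y) := by
  obtain ⟨ψ, hψ0, hψ⟩ := exists_schwartzMap_majorant fun k => max (C (2 * k)) 0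
  have hq : HasTemperateGrowth fun p : ℝ × ℝ => p.1 ^ 2 + p.2 ^ 2 :=
    ((ContinuousLinearMap.fst ℝ ℝ ℝ).hasTemperateGrowth.pow 2).add
      ((ContinuousLinearMap.snd ℝ ℝ ℝ).hasTemperateGrowth.pow 2)
  have hq_upper : ∃ (k : ℕ) (B : ℝ), ∀ p : ℝ × ℝ, ‖p‖ ≤ B * (1 + ‖p.1 ^ 2 + p.2 ^ 2‖) ^ k := by
    refine ⟨1, 1, fun p => ?_⟩
    rw [pow_one, one_mul, norm_of_nonneg (by positivity), Prod.norm_def, norm_eq_abs, norm_eq_abs]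
    refine max_le ?_ ?_ <;> nlinarith [sq_abs p.1, sq_abs p.2, sq_nonneg (|p.1| - 1),
      sq_nonneg (|p.2| - 1), sq_nonneg p.1, sq_nonneg p.2]
  refine ⟨SchwartzMap.compCLM ℝ hq hq_upper ψ, fun p => hψ0 _,
    fun r x y hr => hψ r _ fun k => (hr (2 * k)).trans ?_⟩
  calc C (2 * k) / (1 + x ^ 2 + y ^ 2) ^ (2 * k)
      ≤ max (C (2 * k)) 0 / (1 + x ^ 2 + y ^ 2) ^ (2 * k) := by gcongr; exact le_max_left _ _
    _ ≤ max (C (2 * k)) 0 / (1 + (x ^ 2 + y ^ 2) ^ 2) ^ k := by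
        rw [pow_mul]
        gcongr
        nlinarith [sq_nonneg x, sq_nonneg y]

end SchwartzMajorant

lemma rpow_le_one_add_sq_pow {s d : ℝ} {j : ℕ} (hs : 0 ≤ s) (hd0 : 0 ≤ d) (hd : d ≤ 2 * j) :
    s ^ d ≤ (1 + s ^ 2) ^ j := by
  rcases le_total s 1 with hs1 | hs1
  · exact (rpow_le_one hs hs1 hd0).trans (one_le_pow₀ (by nlinarith))
  · calc s ^ d ≤ s ^ ((2 * j : ℕ) : ℝ) := rpow_le_rpow_of_exponent_le hs1 (by exact_mod_cast hd)
      _ = (s ^ 2) ^ j := by rw [rpow_natCast, pow_mul]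
      _ ≤ (1 + s ^ 2) ^ j := by gcongr; linarith

lemma abs_rpow_neg_mul_one_add_sq_pow_le {d x : ℝ} {j : ℕ} (hd0 : 0 < d) (hd : d ≤ 2 * j)
    (hx : 1 ≤ |x|) (v : ℝ) :
    |v| ^ (-d) * (1 + x ^ 2) ^ j ≤ 2 ^ j * (1 + v ^ 2) ^ j * (1 + (x / v) ^ 2) ^ j := by
  rcases eq_or_ne v 0 with rfl | hv
  · rw [abs_zero, zero_rpow (neg_ne_zero.mpr hd0.ne'), zero_mul]
    positivity
  have hsplit : (1 + v ^ 2) * (1 + (x / v) ^ 2) = (1 + |v|⁻¹ ^ 2) * (v ^ 2 + x ^ 2) := by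
    rw [inv_pow, sq_abs]
    field_simp
    ring
  have hx2 : 1 + x ^ 2 ≤ 2 * (v ^ 2 + x ^ 2) := by nlinarith [sq_abs x]
  calc |v| ^ (-d) * (1 + x ^ 2) ^ j = |v|⁻¹ ^ d * (1 + x ^ 2) ^ j := by
        rw [rpow_neg (abs_nonneg v), inv_rpow (abs_nonneg v)]
    _ ≤ (1 + |v|⁻¹ ^ 2) ^ j * (2 * (v ^ 2 + x ^ 2)) ^ j := by
        gcongr
        exact rpow_le_one_add_sq_pow (by positivity) hd0.le hd
    _ = 2 ^ j * (1 + v ^ 2) ^ j * (1 + (x / v) ^ 2) ^ j := by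
        rw [mul_assoc, ← mul_pow (1 + v ^ 2), hsplit, mul_pow, mul_pow]
        ring

lemma rpow_neg_le_two_rpow_mul {a b d : ℝ} (hd : 0 ≤ d) (ha : 0 < a) (hab : a / 2 ≤ b) :
    b ^ (-d) ≤ 2 ^ d * a ^ (-d) := by
  calc b ^ (-d) ≤ (a / 2) ^ (-d) := rpow_le_rpow_of_nonpos (by positivity) hab (by linarith)
    _ = 2 ^ d * a ^ (-d) := by
        rw [div_rpow ha.le zero_le_two, rpow_neg zero_le_two, div_inv_eq_mul, mul_comm]

lemma one_add_sq_pow_mul_one_add_sq_pow_le {c v : ℝ} (hv : |c| / 2 < |c - v|) (j k : ℕ) :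
    (1 + v ^ 2) ^ j * (1 + c ^ 2) ^ k ≤ 9 ^ j * 4 ^ k * (1 + (c - v) ^ 2) ^ (j + k) := by
  have hv3 : |v| ≤ 3 * |c - v| := by
    have := abs_sub c (c - v)
    rw [sub_sub_cancel] at this
    linarith
  have hvW : 1 + v ^ 2 ≤ 9 * (1 + (c - v) ^ 2) := by
    have := pow_le_pow_left₀ (abs_nonneg v) hv3 2
    rw [mul_pow, sq_abs, sq_abs] at this
    linarith
  have hcW : 1 + c ^ 2 ≤ 4 * (1 + (c - v) ^ 2) := by
    rw [← sq_abs c, ← sq_abs (c - v)]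
    nlinarith [abs_nonneg c]
  calc (1 + v ^ 2) ^ j * (1 + c ^ 2) ^ k
      ≤ (9 * (1 + (c - v) ^ 2)) ^ j * (4 * (1 + (c - v) ^ 2)) ^ k := by gcongr
    _ = 9 ^ j * 4 ^ k * (1 + (c - v) ^ 2) ^ (j + k) := by rw [mul_pow, mul_pow, pow_add]; ring

lemma setIntegral_norm_le_of_le_mul_comp_sub {E : Type*} [NormedAddCommGroup E] {f : ℝ → E}
    {g : ℝ → ℝ} {s : Set ℝ} {K c : ℝ} (hs : MeasurableSet s) (hf : AEStronglyMeasurable f)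
    (hg : Integrable g) (hg0 : ∀ w, 0 ≤ g w) (hK : 0 ≤ K) (h : ∀ v ∈ s, ‖f v‖ ≤ K * g (c - v)) :
    IntegrableOn f s ∧ ∫ v in s, ‖f v‖ ≤ K * ∫ w, g w := by
  have hKg : Integrable fun v => K * g (c - v) := (hg.comp_sub_left c).const_mul K
  have hfs : IntegrableOn f s :=
    hKg.integrableOn.mono' hf.restrict (ae_restrict_of_forall_mem hs h)
  refine ⟨hfs, ?_⟩
  calc ∫ v in s, ‖f v‖ ≤ ∫ v in s, K * g (c - v) :=
        setIntegral_mono_on hfs.norm hKg.integrableOn hs h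
    _ ≤ ∫ v, K * g (c - v) :=
        setIntegral_le_integral hKg (.of_forall fun v => mul_nonneg hK (hg0 (c - v)))
    _ = K * ∫ w, g w := by rw [integral_const_mul, integral_sub_left_eq_self g]

section ConvIntegrand

variable (d : ℝ) (Φ₁ Φ₂ : 𝓢(ℝ, ℂ))

def convIntegrand (x c v : ℝ) : ℂ := Φ₁ (x / v) * ((|v| ^ (-d) : ℝ) : ℂ) * Φ₂ (c - v)

variable {d Φ₁ Φ₂}

lemma norm_convIntegrand (x c v : ℝ) :
    ‖convIntegrand d Φ₁ Φ₂ x c v‖ = ‖Φ₁ (x / v)‖ * |v| ^ (-d) * ‖Φ₂ (c - v)‖ := by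
  rw [convIntegrand, norm_mul, norm_mul, Complex.norm_real, norm_of_nonneg (by positivity)]

lemma aestronglyMeasurable_convIntegrand (x c : ℝ) :
    AEStronglyMeasurable (convIntegrand d Φ₁ Φ₂ x c) := by
  have := Φ₁.continuous
  have := Φ₂.continuous
  have : Measurable (convIntegrand d Φ₁ Φ₂ x c) := by unfold convIntegrand; fun_prop
  exact this.aestronglyMeasurable

lemma norm_convIntegrand_le_of_mem_closedBall (hd : 0 ≤ d) {x c v : ℝ} (hc : c ≠ 0) {k : ℕ}
    {D : ℝ} (hD : ∀ u, (1 + u ^ 2) ^ k * ‖Φ₁ u‖ ≤ D) (hv : v ∈ closedBall c (|c| / 2)) :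
    ‖convIntegrand d Φ₁ Φ₂ x c v‖ ≤
      (9 / 4) ^ k * 2 ^ d * D * |c| ^ (-d) / (1 + (x / c) ^ 2) ^ k * ‖Φ₂ (c - v)‖ := by
  rw [mem_closedBall, dist_eq_norm, norm_eq_abs] at hv
  have hcv : |c| / 2 ≤ |v| := by linarith [abs_sub_abs_le_abs_sub c v, abs_sub_comm c v]
  have hvc : v ^ 2 ≤ 9 / 4 * c ^ 2 := by
    rw [← sq_abs v, ← sq_abs c]
    nlinarith [abs_sub_abs_le_abs_sub v c, abs_nonneg v]
  have hv0 : 0 < v ^ 2 := by rw [← sq_abs]; nlinarith [abs_pos.mpr hc]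
  have hw : 1 + (x / c) ^ 2 ≤ 9 / 4 * (1 + (x / v) ^ 2) := by
    have : x ^ 2 / c ^ 2 ≤ 9 / 4 * (x ^ 2 / v ^ 2) := by
      rw [← mul_div_assoc, div_le_div_iff₀ (by positivity) hv0]
      nlinarith [mul_le_mul_of_nonneg_left hvc (sq_nonneg x)]
    rw [div_pow, div_pow]
    linarith
  have hΦ₁ : ‖Φ₁ (x / v)‖ ≤ (9 / 4) ^ k * D / (1 + (x / c) ^ 2) ^ k := by
    rw [le_div_iff₀ (by positivity)]
    calc ‖Φ₁ (x / v)‖ * (1 + (x / c) ^ 2) ^ k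
        ≤ ‖Φ₁ (x / v)‖ * (9 / 4 * (1 + (x / v) ^ 2)) ^ k := by gcongr
      _ = (9 / 4) ^ k * ((1 + (x / v) ^ 2) ^ k * ‖Φ₁ (x / v)‖) := by rw [mul_pow]; ring
      _ ≤ (9 / 4) ^ k * D := by gcongr; exact hD _
  have hD0 : 0 ≤ D := (by positivity : (0 : ℝ) ≤ _).trans (hD 0)
  rw [norm_convIntegrand]
  calc ‖Φ₁ (x / v)‖ * |v| ^ (-d) * ‖Φ₂ (c - v)‖
      ≤ (9 / 4) ^ k * D / (1 + (x / c) ^ 2) ^ k * (2 ^ d * |c| ^ (-d)) * ‖Φ₂ (c - v)‖ := by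
        gcongr
        exact rpow_neg_le_two_rpow_mul hd (abs_pos.mpr hc) hcv
    _ = (9 / 4) ^ k * 2 ^ d * D * |c| ^ (-d) / (1 + (x / c) ^ 2) ^ k * ‖Φ₂ (c - v)‖ := by ring

lemma norm_convIntegrand_le_of_notMem_closedBall (hd0 : 0 < d) {N k : ℕ} (hN : d ≤ 2 * N)
    {x c v : ℝ} (hx : 1 ≤ |x|) {D : ℝ} (hD : ∀ u, (1 + u ^ 2) ^ (N + k) * ‖Φ₁ u‖ ≤ D)
    (hv : v ∉ closedBall c (|c| / 2)) :
    ‖convIntegrand d Φ₁ Φ₂ x c v‖ ≤ 18 ^ (N + k) * 4 ^ k * D / (1 + x ^ 2 + c ^ 2) ^ k *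
      ((1 + (c - v) ^ 2) ^ (N + 2 * k) * ‖Φ₂ (c - v)‖) := by
  rw [mem_closedBall, dist_eq_norm, norm_eq_abs, abs_sub_comm, not_le] at hv
  have hkernel := abs_rpow_neg_mul_one_add_sq_pow_le (j := N + k) hd0 (by push_cast; linarith) hx v
  have hD0 : 0 ≤ D := (by positivity : (0 : ℝ) ≤ _).trans (hD 0)
  set j := N + k
  have hxc : (1 + x ^ 2 + c ^ 2) ^ k ≤ (1 + x ^ 2) ^ j * (1 + c ^ 2) ^ k := by
    calc (1 + x ^ 2 + c ^ 2) ^ k ≤ ((1 + x ^ 2) * (1 + c ^ 2)) ^ k := by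
          gcongr; nlinarith [sq_nonneg x, sq_nonneg c]
      _ ≤ (1 + x ^ 2) ^ j * (1 + c ^ 2) ^ k := by
          rw [mul_pow]; gcongr
          · nlinarith [sq_nonneg x]
          · omega
  rw [norm_convIntegrand, div_mul_eq_mul_div, le_div_iff₀ (by positivity)]
  calc ‖Φ₁ (x / v)‖ * |v| ^ (-d) * ‖Φ₂ (c - v)‖ * (1 + x ^ 2 + c ^ 2) ^ k
      ≤ ‖Φ₁ (x / v)‖ * |v| ^ (-d) * ‖Φ₂ (c - v)‖ * ((1 + x ^ 2) ^ j * (1 + c ^ 2) ^ k) := by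
        gcongr
    _ = ‖Φ₁ (x / v)‖ * ‖Φ₂ (c - v)‖ * (1 + c ^ 2) ^ k * (|v| ^ (-d) * (1 + x ^ 2) ^ j) := by
        ring
    _ ≤ ‖Φ₁ (x / v)‖ * ‖Φ₂ (c - v)‖ * (1 + c ^ 2) ^ k *
          (2 ^ j * (1 + v ^ 2) ^ j * (1 + (x / v) ^ 2) ^ j) := by
        gcongr
    _ = 2 ^ j * ((1 + (x / v) ^ 2) ^ j * ‖Φ₁ (x / v)‖) *
          ((1 + v ^ 2) ^ j * (1 + c ^ 2) ^ k) * ‖Φ₂ (c - v)‖ := by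
        ring
    _ ≤ 2 ^ j * D * (9 ^ j * 4 ^ k * (1 + (c - v) ^ 2) ^ (j + k)) * ‖Φ₂ (c - v)‖ := by
        gcongr 2 ^ j * ?_ * ?_ * _
        · exact hD _
        · exact one_add_sq_pow_mul_one_add_sq_pow_le hv j k
    _ = 18 ^ j * 4 ^ k * D * ((1 + (c - v) ^ 2) ^ (N + 2 * k) * ‖Φ₂ (c - v)‖) := by
        rw [show (18 : ℝ) ^ j = 2 ^ j * 9 ^ j by rw [← mul_pow]; norm_num,
          show j + k = N + 2 * k by omega]
        ring

variable (Φ₁ Φ₂)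

lemma exists_setIntegral_closedBall_le (hd : 0 ≤ d) :
    ∃ C : ℕ → ℝ, ∀ x c, c ≠ 0 →
      IntegrableOn (convIntegrand d Φ₁ Φ₂ x c) (closedBall c (|c| / 2)) ∧
      ∀ k, (∫ v in closedBall c (|c| / 2), ‖convIntegrand d Φ₁ Φ₂ x c v‖) * |c| ^ d ≤
        C k / (1 + (x / c) ^ 2) ^ k := by
  choose D hD0 hD using Φ₁.exists_one_add_sq_pow_mul_norm_le
  refine ⟨fun k => (9 / 4) ^ k * 2 ^ d * D k * ∫ w, ‖Φ₂ w‖, fun x c hc => ?_⟩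
  have hbound := fun k => setIntegral_norm_le_of_le_mul_comp_sub (f := convIntegrand d Φ₁ Φ₂ x c)
    measurableSet_closedBall (aestronglyMeasurable_convIntegrand x c) Φ₂.integrable.norm
    (fun _ => norm_nonneg _) (by have := hD0 k; positivity)
    fun _ hv => norm_convIntegrand_le_of_mem_closedBall hd hc (D := D k) (by simpa using hD k) hv
  refine ⟨(hbound 0).1, fun k => ?_⟩
  have hc0 : |c| ^ d ≠ 0 := (rpow_pos_of_pos (abs_pos.mpr hc) d).ne'
  calc (∫ v in closedBall c (|c| / 2), ‖convIntegrand d Φ₁ Φ₂ x c v‖) * |c| ^ d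
      ≤ (9 / 4) ^ k * 2 ^ d * D k * |c| ^ (-d) / (1 + (x / c) ^ 2) ^ k * (∫ w, ‖Φ₂ w‖) *
          |c| ^ d := by gcongr; exact (hbound k).2
    _ = (9 / 4) ^ k * 2 ^ d * D k * (∫ w, ‖Φ₂ w‖) / (1 + (x / c) ^ 2) ^ k := by
        rw [rpow_neg (abs_nonneg c)]
        field_simp

lemma exists_setIntegral_compl_closedBall_le (hd0 : 0 < d) :
    ∃ C : ℕ → ℝ, ∀ x c, 1 ≤ |x| →
      IntegrableOn (convIntegrand d Φ₁ Φ₂ x c) (closedBall c (|c| / 2))ᶜ ∧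
      ∀ k, ∫ v in (closedBall c (|c| / 2))ᶜ, ‖convIntegrand d Φ₁ Φ₂ x c v‖ ≤
        C k / (1 + x ^ 2 + c ^ 2) ^ k := by
  obtain ⟨N, hN⟩ : ∃ N : ℕ, d ≤ 2 * N := ⟨⌈d⌉₊, by linarith [Nat.le_ceil d]⟩
  choose D hD0 hD using Φ₁.exists_one_add_sq_pow_mul_norm_le
  refine ⟨fun k => 18 ^ (N + k) * 4 ^ k * D (N + k) *
    ∫ w, (1 + w ^ 2) ^ (N + 2 * k) * ‖Φ₂ w‖, fun x c hx => ?_⟩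
  have hbound := fun k => setIntegral_norm_le_of_le_mul_comp_sub (f := convIntegrand d Φ₁ Φ₂ x c)
    measurableSet_closedBall.compl (aestronglyMeasurable_convIntegrand x c)
    (Φ₂.integrable_one_add_sq_pow_mul_norm (N + 2 * k)) (fun _ => by positivity)
    (by have := hD0 (N + k); positivity)
    fun _ hv => norm_convIntegrand_le_of_notMem_closedBall hd0 hN hx
      (D := D (N + k)) (by simpa using hD (N + k)) hv
  refine ⟨(hbound 0).1, fun k => (hbound k).2.trans_eq ?_⟩
  ring

end ConvIntegrand

/-- Lemma 9.3(i) (archimedean case `F = ℝ`). -/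
theorem stmt5
    (d : ℝ) (hd : 2 ≤ d) (Φ₁ Φ₂ : SchwartzMap ℝ ℂ) :
    ∃ Ψ₁ : SchwartzMap ℝ ℝ, ∃ Ψ₂ : SchwartzMap (ℝ × ℝ) ℝ,
      (∀ x, 0 ≤ Ψ₁ x) ∧ (∀ p, 0 ≤ Ψ₂ p) ∧
      ∀ x c : ℝ, 1 ≤ |x| → c ≠ 0 →
        Integrable (fun v : ℝ => Φ₁ (x / v) * ((|v| ^ (-d) : ℝ) : ℂ) * Φ₂ (c - v)) ∧
        ‖∫ v : ℝ, Φ₁ (x / v) * ((|v| ^ (-d) : ℝ) : ℂ) * Φ₂ (c - v)‖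
          ≤ Ψ₁ (x / c) * |c| ^ (-d) + Ψ₂ (x, c) := by
  obtain ⟨C₁, hC₁⟩ := exists_setIntegral_closedBall_le Φ₁ Φ₂ (by linarith)
  obtain ⟨C₂, hC₂⟩ := exists_setIntegral_compl_closedBall_le Φ₁ Φ₂ (by linarith)
  obtain ⟨Ψ₁, hΨ₁0, hΨ₁⟩ := exists_schwartzMap_majorant C₁
  obtain ⟨Ψ₂, hΨ₂0, hΨ₂⟩ := exists_schwartzMap_majorant_prod C₂
  refine ⟨Ψ₁, Ψ₂, hΨ₁0, hΨ₂0, fun x c hx hc => ?_⟩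
  set f := convIntegrand d Φ₁ Φ₂ x c
  set A := closedBall c (|c| / 2)
  obtain ⟨hA_int, hA⟩ := hC₁ x c hc
  obtain ⟨hAc_int, hAc⟩ := hC₂ x c hx
  have hint : Integrable f := by simpa using hA_int.union hAc_int
  refine ⟨hint, ?_⟩
  calc ‖∫ v, f v‖ ≤ ∫ v, ‖f v‖ := norm_integral_le_integral_norm _
    _ = (∫ v in A, ‖f v‖) * |c| ^ d * |c| ^ (-d) + ∫ v in Aᶜ, ‖f v‖ := by
        rw [mul_assoc, ← rpow_add (abs_pos.mpr hc), add_neg_cancel, rpow_zero, mul_one,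
          integral_add_compl measurableSet_closedBall hint.norm]
    _ ≤ Ψ₁ (x / c) * |c| ^ (-d) + Ψ₂ (x, c) := by
        gcongr
        · exact hΨ₁ _ _ hA
        · exact hΨ₂ _ _ _ hAc
end
end

section
/- Let e₁, e₂ > 0 be real numbers, let Φ be a Schwartz function on ℝ, and let ε > 0. Then there is a constant C > 0 (depending on ε, Φ, e₁, e₂) such that for all r₁, r₂ ∈ ℝ∖{0}: ∫_{ℝ^×} |Φ(r₁/a)| max(1, |r₂ a|)^{−e₁} |a|^{e₁−e₂} d^×a is at most C·|r₁|^{e₁−e₂} max(1, |r₁r₂|)^{−e₁} if e₂ > e₁; at most C·|r₂|^{e₂−e₁} max(1, |r₁r₂|)^{−e₂} if e₂ < e₁; and at most C·max(1, |r₁r₂|)^{−e₂} min(1, |r₁r₂|)^{−ε} if e₂ = e₁. (Lemma 9.5 of the paper, archimedean case F = ℝ.) -/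
/-! Bounding `‖Φ x‖` by `D · min(1, |x|^{-N})` with `N > e₂` and substituting `a = r₁ t`, the
integral is at most `2 D |r₁|^{e₁-e₂}` times `∫₀^∞ min(1, t^N) max(1, u t)^{-e₁} t^{e₁-e₂} dt/t`
with `u = |r₁ r₂|`. On each of the ranges cut out by `1` and `1/u` the integrand is dominated by a
power of `t`. For `u ≥ 1` every range contributes `O(u^{-e₁})`. For `u ≤ 1` the ranges `(0, 1]` and
`(1/u, ∞)` contribute `O(1)` and `O(u^{e₂-e₁})`, and on the middle range `(1, 1/u]`, where the
integrand is `t^{e₁-e₂}`, the integral is `O(1)`, `O(u^{e₂-e₁})` or `log(1/u) = O(u^{-ε})`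
according to the sign of `e₁ - e₂`. -/

open MeasureTheory Set
open scoped ENNReal

noncomputable section

/-- The multiplicative Haar measure `d^×a = da/|a|` on `ℝ^× = ℝ ∖ {0}`. -/
def mulHaar : Measure ℝ := volume.withDensity fun a => ENNReal.ofReal |a|⁻¹

lemma ae_mulHaar_ne_zero : ∀ᵐ a ∂mulHaar, a ≠ 0 :=
  (withDensity_absolutelyContinuous _ _).ae_le (Measure.ae_ne volume 0)

lemma lintegral_mulHaar_comp_mul_left {f : ℝ → ℝ≥0∞} (hf : Measurable f) {c : ℝ} (hc : c ≠ 0) :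
    ∫⁻ a, f (c * a) ∂mulHaar = ∫⁻ a, f a ∂mulHaar := by
  set g : ℝ → ℝ≥0∞ := fun b => ENNReal.ofReal |b|⁻¹ * f b
  have hg : Measurable g := by fun_prop
  have hdensity : ∀ a : ℝ, ENNReal.ofReal |a|⁻¹ * f (c * a) = ENNReal.ofReal |c| * g (c * a) := by
    intro a
    rw [← mul_assoc, ← ENNReal.ofReal_mul (abs_nonneg c), abs_mul, mul_inv,
      mul_inv_cancel_left₀ (abs_ne_zero.2 hc)]
  have hρ : Measurable fun a : ℝ => ENNReal.ofReal |a|⁻¹ := by fun_prop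
  have hfc : Measurable fun a => f (c * a) := hf.comp (measurable_const_mul c)
  rw [mulHaar, lintegral_withDensity_eq_lintegral_mul _ hρ hfc,
    lintegral_withDensity_eq_lintegral_mul _ hρ hf]
  simp only [Pi.mul_apply, hdensity]
  have hmap : ∫⁻ a, g (c * a) = ENNReal.ofReal |c⁻¹| * ∫⁻ b, g b := by
    rw [← smul_eq_mul, ← lintegral_smul_measure, ← Real.map_volume_mul_left hc,
      lintegral_map hg (measurable_const_mul c)]
  rw [lintegral_const_mul' _ _ ENNReal.ofReal_ne_top, hmap, ← mul_assoc,
    ← ENNReal.ofReal_mul (abs_nonneg c), abs_inv, mul_inv_cancel₀ (abs_ne_zero.2 hc),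
    ENNReal.ofReal_one, one_mul]

lemma lintegral_mulHaar_comp_abs {g : ℝ → ℝ≥0∞} (hg : Measurable g) :
    ∫⁻ a, g |a| ∂mulHaar = 2 * ∫⁻ t in Ioi 0, g t ∂mulHaar := by
  set h := (Ioi (0 : ℝ)).indicator g
  have hh : Measurable h := hg.indicator measurableSet_Ioi
  have hsplit : (fun a => g |a|) =ᵐ[mulHaar] fun a => h a + h (-1 * a) := by
    filter_upwards [ae_mulHaar_ne_zero] with a ha
    rcases ha.lt_or_gt with ha | ha
    · simp [h, ha, abs_of_neg ha, ha.not_gt]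
    · simp [h, ha, abs_of_pos ha, ha.le]
  rw [lintegral_congr_ae hsplit, lintegral_add_left hh,
    lintegral_mulHaar_comp_mul_left hh (by norm_num), lintegral_indicator measurableSet_Ioi,
    two_mul]

lemma setLIntegral_mulHaar_rpow {s : Set ℝ} (hs : MeasurableSet s) (hs₀ : s ⊆ Ioi 0) (β : ℝ) :
    ∫⁻ t in s, ENNReal.ofReal (t ^ β) ∂mulHaar = ∫⁻ t in s, ENNReal.ofReal (t ^ (β - 1)) := by
  rw [mulHaar, setLIntegral_withDensity_eq_setLIntegral_mul _ (by fun_prop) (by fun_prop) hs]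
  refine setLIntegral_congr_fun hs fun t ht => ?_
  have ht : 0 < t := hs₀ ht
  rw [Pi.mul_apply, ← ENNReal.ofReal_mul (by positivity), abs_of_pos ht,
    Real.rpow_sub_one ht.ne', div_eq_inv_mul]

lemma setLIntegral_Ioc_rpow_mulHaar {β Y : ℝ} (hβ : 0 < β) (hY : 0 ≤ Y) :
    ∫⁻ t in Ioc 0 Y, ENNReal.ofReal (t ^ β) ∂mulHaar = ENNReal.ofReal (Y ^ β / β) := by
  have hint : IntegrableOn (fun t : ℝ => t ^ (β - 1)) (Ioc 0 Y) :=
    (intervalIntegrable_iff_integrableOn_Ioc_of_le hY).1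
      (intervalIntegral.intervalIntegrable_rpow' (by linarith))
  rw [setLIntegral_mulHaar_rpow measurableSet_Ioc Ioc_subset_Ioi_self,
    ← ofReal_integral_eq_lintegral_ofReal hint
      ((ae_restrict_iff' measurableSet_Ioc).2 (ae_of_all _ fun t ht => by
        have := ht.1; positivity)),
    ← intervalIntegral.integral_of_le hY, integral_rpow (Or.inl (by linarith)), sub_add_cancel,
    Real.zero_rpow hβ.ne', sub_zero]

lemma setLIntegral_Ioi_rpow_mulHaar {β X : ℝ} (hβ : β < 0) (hX : 0 < X) :
    ∫⁻ t in Ioi X, ENNReal.ofReal (t ^ β) ∂mulHaar = ENNReal.ofReal (X ^ β / -β) := by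
  rw [setLIntegral_mulHaar_rpow measurableSet_Ioi (Ioi_subset_Ioi hX.le),
    ← ofReal_integral_eq_lintegral_ofReal (integrableOn_Ioi_rpow_of_lt (by linarith) hX)
      ((ae_restrict_iff' measurableSet_Ioi).2 (ae_of_all _ fun t ht => by
        have : 0 < t := hX.trans ht; positivity)),
    integral_Ioi_rpow_of_lt (by linarith) hX, sub_add_cancel, neg_div, div_neg]

lemma mulHaar_Ioc {X Y : ℝ} (hX : 0 < X) (hXY : X ≤ Y) :
    mulHaar (Ioc X Y) = ENNReal.ofReal (Real.log (Y / X)) := by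
  have hpos : ∀ t ∈ Ioc X Y, 0 < t := fun t ht => hX.trans ht.1
  have hint : IntegrableOn (fun t : ℝ => t⁻¹) (Ioc X Y) :=
    (intervalIntegrable_iff_integrableOn_Ioc_of_le hXY).1
      (intervalIntegral.intervalIntegrable_inv (fun t ht => by
        rw [uIcc_of_le hXY] at ht; exact (hX.trans_le ht.1).ne') continuousOn_id)
  rw [mulHaar, withDensity_apply _ measurableSet_Ioc,
    setLIntegral_congr_fun measurableSet_Ioc fun t ht => by rw [abs_of_pos (hpos t ht)],
    ← ofReal_integral_eq_lintegral_ofReal hint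
      ((ae_restrict_iff' measurableSet_Ioc).2 (ae_of_all _ fun t ht => (inv_pos.2 (hpos t ht)).le)),
    ← intervalIntegral.integral_of_le hXY, integral_inv_of_pos hX (hX.trans_le hXY)]

lemma SchwartzMap.exists_norm_le_mul_min_one_inv_pow {E F : Type*} [NormedAddCommGroup E]
    [NormedSpace ℝ E] [NormedAddCommGroup F] [NormedSpace ℝ F] (Φ : SchwartzMap E F) (k : ℕ) :
    ∃ D, 0 < D ∧ ∀ x ≠ 0, ‖Φ x‖ ≤ D * min 1 (‖x‖⁻¹ ^ k) := by
  set s₀ := SchwartzMap.seminorm ℝ 0 0 Φ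
  set sₖ := SchwartzMap.seminorm ℝ k 0 Φ
  refine ⟨s₀ + sₖ + 1, by positivity, fun x hx => ?_⟩
  have hx : 0 < ‖x‖ ^ k := pow_pos (norm_pos_iff.2 hx) k
  have h₀ : ‖Φ x‖ ≤ s₀ := Φ.norm_le_seminorm ℝ x
  have hₖ : ‖x‖ ^ k * ‖Φ x‖ ≤ sₖ := Φ.norm_pow_mul_le_seminorm ℝ k x
  have : 0 ≤ s₀ := apply_nonneg _ _
  have : 0 ≤ sₖ := apply_nonneg _ _
  rw [mul_min_of_nonneg _ _ (by positivity), mul_one, inv_pow, ← div_eq_mul_inv,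
    le_min_iff, le_div_iff₀ hx]
  constructor <;> nlinarith

lemma setLIntegral_ofReal_le_mul {α : Type*} [MeasurableSpace α] {μ : Measure α} {s : Set α}
    (hs : MeasurableSet s) {f g : α → ℝ} {c : ℝ} (hc : 0 ≤ c) (h : ∀ x ∈ s, f x ≤ c * g x) :
    ∫⁻ x in s, ENNReal.ofReal (f x) ∂μ ≤ ENNReal.ofReal c * ∫⁻ x in s, ENNReal.ofReal (g x) ∂μ := by
  rw [← lintegral_const_mul' _ _ ENNReal.ofReal_ne_top]
  exact setLIntegral_mono' hs fun x hx =>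
    (ENNReal.ofReal_le_ofReal (h x hx)).trans_eq (ENNReal.ofReal_mul hc)

lemma setLIntegral_Ioi_le_add {μ : Measure ℝ} {f : ℝ → ℝ≥0∞} {p q A B C : ℝ} (hp : 0 ≤ p)
    (hpq : p ≤ q) (hA : 0 ≤ A) (hB : 0 ≤ B) (hC : 0 ≤ C)
    (h₁ : ∫⁻ t in Ioc 0 p, f t ∂μ ≤ ENNReal.ofReal A)
    (h₂ : ∫⁻ t in Ioc p q, f t ∂μ ≤ ENNReal.ofReal B)
    (h₃ : ∫⁻ t in Ioi q, f t ∂μ ≤ ENNReal.ofReal C) :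
    ∫⁻ t in Ioi 0, f t ∂μ ≤ ENNReal.ofReal (A + B + C) := by
  rw [← Ioc_union_Ioi_eq_Ioi hp, ← Ioc_union_Ioi_eq_Ioi hpq, ← union_assoc,
    ENNReal.ofReal_add (add_nonneg hA hB) hC, ENNReal.ofReal_add hA hB]
  calc _ ≤ ∫⁻ t in Ioc 0 p ∪ Ioc p q, f t ∂μ + ∫⁻ t in Ioi q, f t ∂μ := lintegral_union_le _ _ _
    _ ≤ ∫⁻ t in Ioc 0 p, f t ∂μ + ∫⁻ t in Ioc p q, f t ∂μ + ∫⁻ t in Ioi q, f t ∂μ := by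
        gcongr; exact lintegral_union_le _ _ _
    _ ≤ _ := by gcongr

/-- The integrand after the substitution `a = r₁ t`, with `‖Φ x‖` replaced by its majorant
`min(1, |x|^{-N})`; `u` stands for `|r₁ r₂|`. -/
def profile (N e₁ e₂ u t : ℝ) : ℝ := min 1 (t ^ N) * max 1 (u * t) ^ (-e₁) * t ^ (e₁ - e₂)

section Profile

variable {N e₁ e₂ u t : ℝ}

lemma profile_le (he₁ : 0 ≤ e₁) (ht : 0 ≤ t) :
    profile N e₁ e₂ u t ≤ min 1 (t ^ N) * t ^ (e₁ - e₂) := by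
  have hmax : max 1 (u * t) ^ (-e₁) ≤ 1 :=
    Real.rpow_le_one_of_one_le_of_nonpos (le_max_left _ _) (neg_nonpos.2 he₁)
  have hmin : 0 ≤ min 1 (t ^ N) := le_min zero_le_one (by positivity)
  simpa [profile] using mul_le_mul_of_nonneg_right (mul_le_mul_of_nonneg_left hmax hmin)
    (by positivity : 0 ≤ t ^ (e₁ - e₂))

lemma profile_le_rpow_sub (he₁ : 0 ≤ e₁) (ht : 0 ≤ t) : profile N e₁ e₂ u t ≤ t ^ (e₁ - e₂) :=
  (profile_le he₁ ht).trans
    (mul_le_of_le_one_left (by positivity) (min_le_left _ _))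

lemma profile_le_rpow_add (he₁ : 0 ≤ e₁) (ht : 0 < t) :
    profile N e₁ e₂ u t ≤ t ^ (N + e₁ - e₂) := by
  rw [add_sub_assoc, Real.rpow_add ht]
  exact (profile_le he₁ ht.le).trans
    (mul_le_mul_of_nonneg_right (min_le_right _ _) (by positivity))

lemma profile_of_one_le_mul (ht : 0 < t) (hut : 1 ≤ u * t) :
    profile N e₁ e₂ u t = min 1 (t ^ N) * (u ^ (-e₁) * t ^ (-e₂)) := by
  have hu : 0 < u := pos_of_mul_pos_left (zero_lt_one.trans_le hut) ht.le
  rw [profile, max_eq_right hut, Real.mul_rpow hu.le ht.le, mul_assoc, mul_assoc,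
    ← Real.rpow_add ht]
  ring_nf

lemma setLIntegral_Ioc_profile_le (he₁ : 0 ≤ e₁) (hN : 0 < N + e₁ - e₂) {Y : ℝ} (hY : 0 ≤ Y) :
    ∫⁻ t in Ioc 0 Y, ENNReal.ofReal (profile N e₁ e₂ u t) ∂mulHaar ≤
      ENNReal.ofReal (Y ^ (N + e₁ - e₂) / (N + e₁ - e₂)) := by
  rw [← setLIntegral_Ioc_rpow_mulHaar hN hY]
  exact setLIntegral_mono' measurableSet_Ioc fun t ht =>
    ENNReal.ofReal_le_ofReal (profile_le_rpow_add he₁ ht.1)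

lemma setLIntegral_Ioi_profile_le (he₂ : 0 < e₂) {X : ℝ} (hX : 0 < X) (huX : 1 ≤ u * X) :
    ∫⁻ t in Ioi X, ENNReal.ofReal (profile N e₁ e₂ u t) ∂mulHaar ≤
      ENNReal.ofReal (u ^ (-e₁) * (X ^ (-e₂) / e₂)) := by
  have hu : 0 < u := pos_of_mul_pos_left (zero_lt_one.trans_le huX) hX.le
  calc _ ≤ ENNReal.ofReal (u ^ (-e₁)) * ∫⁻ t in Ioi X, ENNReal.ofReal (t ^ (-e₂)) ∂mulHaar := by
        refine setLIntegral_ofReal_le_mul measurableSet_Ioi (by positivity) fun t ht => ?_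
        have ht₀ : 0 < t := hX.trans ht
        rw [profile_of_one_le_mul ht₀ (huX.trans (by gcongr; exact ht.le))]
        exact mul_le_of_le_one_left (by positivity) (min_le_left _ _)
    _ = _ := by
        rw [setLIntegral_Ioi_rpow_mulHaar (by linarith) hX, neg_neg,
          ← ENNReal.ofReal_mul (by positivity)]

lemma setLIntegral_profile_le_of_one_le (he₁ : 0 < e₁) (he₂ : 0 < e₂) (hN : e₂ < N)
    (hu : 1 ≤ u) :
    ∫⁻ t in Ioi 0, ENNReal.ofReal (profile N e₁ e₂ u t) ∂mulHaar ≤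
      ENNReal.ofReal ((1 / (N + e₁ - e₂) + 1 / (N - e₂) + 1 / e₂) * u ^ (-e₁)) := by
  have hu₀ : 0 < u := zero_lt_one.trans_le hu
  have hN₁ : 0 < N + e₁ - e₂ := by linarith
  have hN₂ : 0 < N - e₂ := by linarith
  have hfirst : u⁻¹ ^ (N + e₁ - e₂) / (N + e₁ - e₂) ≤ 1 / (N + e₁ - e₂) * u ^ (-e₁) := by
    rw [Real.inv_rpow hu₀.le, ← Real.rpow_neg hu₀.le, div_eq_inv_mul, one_div]
    gcongr
    linarith
  have hmiddle : ∫⁻ t in Ioc u⁻¹ 1, ENNReal.ofReal (profile N e₁ e₂ u t) ∂mulHaar ≤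
      ENNReal.ofReal (1 / (N - e₂) * u ^ (-e₁)) := by
    calc _ ≤ ENNReal.ofReal (u ^ (-e₁)) * ∫⁻ t in Ioc u⁻¹ 1, ENNReal.ofReal (t ^ (N - e₂))
          ∂mulHaar := by
          refine setLIntegral_ofReal_le_mul measurableSet_Ioc (by positivity) fun t ht => ?_
          have ht₀ : 0 < t := (inv_pos.2 hu₀).trans ht.1
          have hut : 1 ≤ u * t := by
            rw [← mul_inv_cancel₀ hu₀.ne']; gcongr; exact ht.1.le
          rw [profile_of_one_le_mul ht₀ hut, sub_eq_add_neg, Real.rpow_add ht₀]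
          nlinarith [min_le_right 1 (t ^ N), (by positivity : 0 < u ^ (-e₁) * t ^ (-e₂))]
      _ ≤ ENNReal.ofReal (u ^ (-e₁)) * ∫⁻ t in Ioc 0 1, ENNReal.ofReal (t ^ (N - e₂))
          ∂mulHaar := by
          gcongr
          exact inv_nonneg.2 hu₀.le
      _ = _ := by
          rw [setLIntegral_Ioc_rpow_mulHaar hN₂ zero_le_one, Real.one_rpow,
            ← ENNReal.ofReal_mul (by positivity), mul_comm]
  rw [add_mul, add_mul]
  refine setLIntegral_Ioi_le_add (inv_nonneg.2 hu₀.le) (inv_le_one_of_one_le₀ hu)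
    (by positivity) (by positivity) (by positivity)
    ((setLIntegral_Ioc_profile_le he₁.le hN₁ (inv_nonneg.2 hu₀.le)).trans
      (ENNReal.ofReal_le_ofReal hfirst)) hmiddle
    ((setLIntegral_Ioi_profile_le he₂ zero_lt_one (by simpa using hu)).trans_eq ?_)
  rw [Real.one_rpow, mul_comm, one_div]

lemma setLIntegral_profile_le_of_le_one (he₁ : 0 < e₁) (he₂ : 0 < e₂) (hN : e₂ < N)
    (hu₀ : 0 < u) (hu : u ≤ 1) {B : ℝ} (hB : 0 ≤ B)
    (hmiddle : ∫⁻ t in Ioc 1 u⁻¹, ENNReal.ofReal (t ^ (e₁ - e₂)) ∂mulHaar ≤ ENNReal.ofReal B) :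
    ∫⁻ t in Ioi 0, ENNReal.ofReal (profile N e₁ e₂ u t) ∂mulHaar ≤
      ENNReal.ofReal (1 / (N + e₁ - e₂) + B + u ^ (e₂ - e₁) / e₂) := by
  have hN₁ : 0 < N + e₁ - e₂ := by linarith
  refine setLIntegral_Ioi_le_add zero_le_one (one_le_inv_iff₀.2 ⟨hu₀, hu⟩)
    (by positivity) hB (by positivity)
    ((setLIntegral_Ioc_profile_le he₁.le hN₁ zero_le_one).trans_eq (by rw [Real.one_rpow]))
    ((setLIntegral_mono' measurableSet_Ioc fun t ht =>
      ENNReal.ofReal_le_ofReal (profile_le_rpow_sub he₁.le (zero_le_one.trans ht.1.le))).trans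
      hmiddle)
    ((setLIntegral_Ioi_profile_le he₂ (inv_pos.2 hu₀) (mul_inv_cancel₀ hu₀.ne').ge).trans_eq ?_)
  rw [Real.inv_rpow hu₀.le, ← Real.rpow_neg hu₀.le, neg_neg, ← mul_div_assoc,
    ← Real.rpow_add hu₀, neg_add_eq_sub]

/-- `T` is the shape of the claimed bound; only the middle range `(1, 1/u]` behaves differently
according to the sign of `e₁ - e₂`, so its contribution is taken as a hypothesis. -/
lemma exists_setLIntegral_profile_le (he₁ : 0 < e₁) (he₂ : 0 < e₂) (hN : e₂ < N)
    {T : ℝ → ℝ} {M : ℝ} (hM : 0 ≤ M) (hT_ge : ∀ u, 1 ≤ u → u ^ (-e₁) ≤ T u)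
    (hT_le : ∀ u, 0 < u → u ≤ 1 → 1 ≤ T u ∧ u ^ (e₂ - e₁) ≤ T u)
    (hmiddle : ∀ u, 0 < u → u ≤ 1 →
      ∫⁻ t in Ioc 1 u⁻¹, ENNReal.ofReal (t ^ (e₁ - e₂)) ∂mulHaar ≤ ENNReal.ofReal (M * T u)) :
    ∃ K, 0 < K ∧ ∀ u, 0 < u →
      ∫⁻ t in Ioi 0, ENNReal.ofReal (profile N e₁ e₂ u t) ∂mulHaar ≤ ENNReal.ofReal (K * T u) := by
  have ha : 0 < 1 / (N + e₁ - e₂) := by apply div_pos one_pos; linarith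
  have hb : 0 < 1 / (N - e₂) := by apply div_pos one_pos; linarith
  have hc : 0 < 1 / e₂ := by positivity
  refine ⟨1 / (N + e₁ - e₂) + 1 / (N - e₂) + 1 / e₂ + M, by positivity, fun u hu₀ => ?_⟩
  rcases le_total 1 u with hu | hu
  · have hT := hT_ge u hu
    have hT₀ : 0 ≤ T u := (by positivity : 0 ≤ u ^ (-e₁)).trans hT
    refine (setLIntegral_profile_le_of_one_le he₁ he₂ hN hu).trans (ENNReal.ofReal_le_ofReal ?_)
    nlinarith [mul_nonneg hM hT₀]
  · obtain ⟨hT₁, hT₂⟩ := hT_le u hu₀ hu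
    refine (setLIntegral_profile_le_of_le_one he₁ he₂ hN hu₀ hu (by positivity)
      (hmiddle u hu₀ hu)).trans (ENNReal.ofReal_le_ofReal ?_)
    have : u ^ (e₂ - e₁) / e₂ ≤ 1 / e₂ * T u := by
      rw [one_div_mul_eq_div]; exact div_le_div_of_nonneg_right hT₂ he₂.le
    nlinarith

lemma exists_setLIntegral_profile_le_of_lt (he₁ : 0 < e₁) (h : e₁ < e₂) (hN : e₂ < N) :
    ∃ K, 0 < K ∧ ∀ u, 0 < u → ∫⁻ t in Ioi 0, ENNReal.ofReal (profile N e₁ e₂ u t) ∂mulHaar ≤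
      ENNReal.ofReal (K * max 1 u ^ (-e₁)) := by
  refine exists_setLIntegral_profile_le he₁ (he₁.trans h) hN (M := 1 / (e₂ - e₁))
    (by rw [one_div_nonneg]; linarith) (fun u hu => by rw [max_eq_right hu])
    (fun u hu₀ hu => ?_) (fun u hu₀ hu => ?_)
  · rw [max_eq_left hu, Real.one_rpow]
    exact ⟨le_rfl, Real.rpow_le_one hu₀.le hu (by linarith)⟩
  · rw [max_eq_left hu, Real.one_rpow, mul_one]
    calc _ ≤ ∫⁻ t in Ioi 1, ENNReal.ofReal (t ^ (e₁ - e₂)) ∂mulHaar :=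
          lintegral_mono_set Ioc_subset_Ioi_self
      _ = _ := by
          rw [setLIntegral_Ioi_rpow_mulHaar (by linarith) zero_lt_one, Real.one_rpow, neg_sub]

lemma exists_setLIntegral_profile_le_of_gt (he₂ : 0 < e₂) (h : e₂ < e₁) (hN : e₂ < N) :
    ∃ K, 0 < K ∧ ∀ u, 0 < u → ∫⁻ t in Ioi 0, ENNReal.ofReal (profile N e₁ e₂ u t) ∂mulHaar ≤
      ENNReal.ofReal (K * (u ^ (e₂ - e₁) * max 1 u ^ (-e₂))) := by
  refine exists_setLIntegral_profile_le (he₂.trans h) he₂ hN (M := 1 / (e₁ - e₂))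
    (by rw [one_div_nonneg]; linarith) (fun u hu => ?_) (fun u hu₀ hu => ?_) (fun u hu₀ hu => ?_)
  · have hu₀ : 0 < u := zero_lt_one.trans_le hu
    rw [max_eq_right hu, ← Real.rpow_add hu₀]
    exact le_of_eq (by ring_nf)
  · rw [max_eq_left hu, Real.one_rpow, mul_one]
    exact ⟨Real.one_le_rpow_of_pos_of_le_one_of_nonpos hu₀ hu (by linarith), le_rfl⟩
  · rw [max_eq_left hu, Real.one_rpow, mul_one]
    calc _ ≤ ∫⁻ t in Ioc 0 u⁻¹, ENNReal.ofReal (t ^ (e₁ - e₂)) ∂mulHaar :=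
          lintegral_mono_set (Ioc_subset_Ioc_left zero_le_one)
      _ = _ := by
          rw [setLIntegral_Ioc_rpow_mulHaar (by linarith) (inv_nonneg.2 hu₀.le),
            Real.inv_rpow hu₀.le, ← Real.rpow_neg hu₀.le, neg_sub, div_eq_inv_mul, one_div]

lemma exists_setLIntegral_profile_le_of_eq (he₁ : 0 < e₁) (hN : e₁ < N) {ε : ℝ} (hε : 0 < ε) :
    ∃ K, 0 < K ∧ ∀ u, 0 < u → ∫⁻ t in Ioi 0, ENNReal.ofReal (profile N e₁ e₁ u t) ∂mulHaar ≤
      ENNReal.ofReal (K * (max 1 u ^ (-e₁) * min 1 u ^ (-ε))) := by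
  refine exists_setLIntegral_profile_le he₁ he₁ hN (M := 1 / ε) (by positivity)
    (fun u hu => ?_) (fun u hu₀ hu => ?_) (fun u hu₀ hu => ?_)
  · rw [max_eq_right hu, min_eq_left hu, Real.one_rpow, mul_one]
  · have hT : 1 ≤ u ^ (-ε) := Real.one_le_rpow_of_pos_of_le_one_of_nonpos hu₀ hu (by linarith)
    rw [max_eq_left hu, min_eq_right hu, Real.one_rpow, one_mul, sub_self, Real.rpow_zero]
    exact ⟨hT, hT⟩
  · rw [max_eq_left hu, min_eq_right hu, Real.one_rpow, one_mul]
    simp only [sub_self, Real.rpow_zero, ENNReal.ofReal_one, setLIntegral_one]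
    rw [mulHaar_Ioc zero_lt_one (one_le_inv_iff₀.2 ⟨hu₀, hu⟩), div_one]
    refine ENNReal.ofReal_le_ofReal ((Real.log_le_rpow_div (inv_nonneg.2 hu₀.le) hε).trans_eq ?_)
    rw [Real.inv_rpow hu₀.le, ← Real.rpow_neg hu₀.le, div_eq_inv_mul, one_div]

end Profile

lemma norm_comp_div_mul_le_profile {E : Type*} [NormedAddCommGroup E] {f : ℝ → E} {D : ℝ}
    {N : ℕ} (hf : ∀ x ≠ 0, ‖f x‖ ≤ D * min 1 (‖x‖⁻¹ ^ N)) {e₁ e₂ r₁ r₂ a : ℝ} (h₁ : r₁ ≠ 0)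
    (ha : a ≠ 0) :
    ‖f (r₁ / a)‖ * max 1 |r₂ * a| ^ (-e₁) * |a| ^ (e₁ - e₂) ≤
      D * |r₁| ^ (e₁ - e₂) * profile N e₁ e₂ |r₁ * r₂| |r₁⁻¹ * a| := by
  set t := |r₁⁻¹ * a|
  have hft : ‖f (r₁ / a)‖ ≤ D * min 1 (t ^ (N : ℝ)) := by
    have ht : ‖r₁ / a‖⁻¹ = t := by rw [Real.norm_eq_abs, ← abs_inv, inv_div, div_eq_inv_mul]
    simpa only [ht, ← Real.rpow_natCast] using hf (r₁ / a) (div_ne_zero h₁ ha)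
  have hu : |r₂ * a| = |r₁ * r₂| * t := by
    rw [← abs_mul]; congr 1; field_simp
  have ha : |a| ^ (e₁ - e₂) = |r₁| ^ (e₁ - e₂) * t ^ (e₁ - e₂) := by
    rw [← Real.mul_rpow (abs_nonneg _) (abs_nonneg _), ← abs_mul, mul_inv_cancel_left₀ h₁]
  rw [hu, ha, profile]
  calc _ ≤ D * min 1 (t ^ (N : ℝ)) * max 1 (|r₁ * r₂| * t) ^ (-e₁) *
        (|r₁| ^ (e₁ - e₂) * t ^ (e₁ - e₂)) := by gcongr
    _ = _ := by ring

lemma lintegral_mulHaar_le_of_profile {E : Type*} [NormedAddCommGroup E] {f : ℝ → E} {D : ℝ}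
    {N : ℕ} (hD : 0 ≤ D) (hf : ∀ x ≠ 0, ‖f x‖ ≤ D * min 1 (‖x‖⁻¹ ^ N)) {e₁ e₂ r₁ r₂ B : ℝ}
    (h₁ : r₁ ≠ 0)
    (hB : ∫⁻ t in Ioi 0, ENNReal.ofReal (profile N e₁ e₂ |r₁ * r₂| t) ∂mulHaar ≤
      ENNReal.ofReal B) :
    ∫⁻ a, ENNReal.ofReal (‖f (r₁ / a)‖ * max 1 |r₂ * a| ^ (-e₁) * |a| ^ (e₁ - e₂)) ∂mulHaar ≤
      ENNReal.ofReal (2 * D * |r₁| ^ (e₁ - e₂) * B) := by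
  have hc : 0 ≤ D * |r₁| ^ (e₁ - e₂) := by positivity
  have hmeas : Measurable fun t => ENNReal.ofReal (profile N e₁ e₂ |r₁ * r₂| t) := by
    unfold profile; fun_prop
  calc _ ≤ ∫⁻ a, ENNReal.ofReal (D * |r₁| ^ (e₁ - e₂)) *
        ENNReal.ofReal (profile N e₁ e₂ |r₁ * r₂| |r₁⁻¹ * a|) ∂mulHaar := by
        refine lintegral_mono_ae ?_
        filter_upwards [ae_mulHaar_ne_zero] with a ha
        rw [← ENNReal.ofReal_mul hc]
        exact ENNReal.ofReal_le_ofReal (norm_comp_div_mul_le_profile hf h₁ ha)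
    _ = ENNReal.ofReal (D * |r₁| ^ (e₁ - e₂)) *
        (2 * ∫⁻ t in Ioi 0, ENNReal.ofReal (profile N e₁ e₂ |r₁ * r₂| t) ∂mulHaar) := by
        rw [lintegral_const_mul' _ _ ENNReal.ofReal_ne_top,
          lintegral_mulHaar_comp_mul_left
            (f := fun a => ENNReal.ofReal (profile N e₁ e₂ |r₁ * r₂| |a|))
            (hmeas.comp measurable_abs) (inv_ne_zero h₁),
          lintegral_mulHaar_comp_abs hmeas]
    _ ≤ ENNReal.ofReal (D * |r₁| ^ (e₁ - e₂)) * (2 * ENNReal.ofReal B) := by gcongr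
    _ = _ := by
        rw [← ENNReal.ofReal_ofNat 2, ← ENNReal.ofReal_mul zero_le_two,
          ← ENNReal.ofReal_mul hc]
        ring_nf

/-- Lemma 9.5 (archimedean case `F = ℝ`). -/
theorem stmt9
    (e₁ e₂ : ℝ) (he₁ : 0 < e₁) (he₂ : 0 < e₂) (Φ : SchwartzMap ℝ ℂ)
    (ε : ℝ) (hε : 0 < ε) :
    ∃ C : ℝ, 0 < C ∧
      ∀ r₁ r₂ : ℝ, r₁ ≠ 0 → r₂ ≠ 0 →
        (e₁ < e₂ →
          (∫⁻ a : ℝ, ENNReal.ofReal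
              (‖Φ (r₁ / a)‖ * max 1 |r₂ * a| ^ (-e₁) * |a| ^ (e₁ - e₂)) ∂mulHaar)
            ≤ ENNReal.ofReal (C * |r₁| ^ (e₁ - e₂) * max 1 |r₁ * r₂| ^ (-e₁))) ∧
        (e₂ < e₁ →
          (∫⁻ a : ℝ, ENNReal.ofReal
              (‖Φ (r₁ / a)‖ * max 1 |r₂ * a| ^ (-e₁) * |a| ^ (e₁ - e₂)) ∂mulHaar)
            ≤ ENNReal.ofReal (C * |r₂| ^ (e₂ - e₁) * max 1 |r₁ * r₂| ^ (-e₂))) ∧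
        (e₁ = e₂ →
          (∫⁻ a : ℝ, ENNReal.ofReal
              (‖Φ (r₁ / a)‖ * max 1 |r₂ * a| ^ (-e₁) * |a| ^ (e₁ - e₂)) ∂mulHaar)
            ≤ ENNReal.ofReal
                (C * max 1 |r₁ * r₂| ^ (-e₂) * min 1 |r₁ * r₂| ^ (-ε))) := by
  obtain ⟨N, hN⟩ := exists_nat_gt e₂
  obtain ⟨D, hD, hΦ⟩ := Φ.exists_norm_le_mul_min_one_inv_pow N
  rcases lt_trichotomy e₁ e₂ with h | rfl | h
  · obtain ⟨K, hK, hJ⟩ := exists_setLIntegral_profile_le_of_lt he₁ h hN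
    refine ⟨2 * D * K, by positivity, fun r₁ r₂ h₁ h₂ =>
      ⟨fun _ => ?_, fun h' => absurd h' h.not_gt, fun h' => absurd h' h.ne⟩⟩
    refine (lintegral_mulHaar_le_of_profile hD.le hΦ h₁ (hJ _ (by positivity))).trans_eq ?_
    congr 1; ring
  · obtain ⟨K, hK, hJ⟩ := exists_setLIntegral_profile_le_of_eq he₁ hN hε
    refine ⟨2 * D * K, by positivity, fun r₁ r₂ h₁ h₂ =>
      ⟨fun h' => absurd h' (lt_irrefl _), fun h' => absurd h' (lt_irrefl _), fun _ => ?_⟩⟩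
    refine (lintegral_mulHaar_le_of_profile hD.le hΦ h₁ (hJ _ (by positivity))).trans_eq ?_
    rw [sub_self, Real.rpow_zero]
    congr 1; ring
  · obtain ⟨K, hK, hJ⟩ := exists_setLIntegral_profile_le_of_gt he₂ h hN
    refine ⟨2 * D * K, by positivity, fun r₁ r₂ h₁ h₂ =>
      ⟨fun h' => absurd h' h.not_gt, fun _ => ?_, fun h' => absurd h' h.ne'⟩⟩
    refine (lintegral_mulHaar_le_of_profile hD.le hΦ h₁ (hJ _ (by positivity))).trans_eq ?_
    have hr : |r₁| ^ (e₁ - e₂) * |r₁ * r₂| ^ (e₂ - e₁) = |r₂| ^ (e₂ - e₁) := by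
      rw [abs_mul, Real.mul_rpow (abs_nonneg _) (abs_nonneg _), ← mul_assoc,
        ← Real.rpow_add (abs_pos.2 h₁), sub_add_sub_cancel', sub_self, Real.rpow_zero, one_mul]
    congr 1
    rw [← hr]; ring
end
end

section
/- Let d₁, d₂, d₃ be even integers with dᵢ ≥ 4, let ε ∈ (0, 1/2), and let M₃ be a Schwartz function on ℝ⁴. Then there is a constant C > 0 (depending on M₃, ε and the dᵢ) such that for every c ∈ ℝ∖{0}: ∫_{(ℝ^×)³} | M₃( c/[a], a₁c/[a], a₂c/[a], a₃c/[a] ) | · max(1, |a₁|)^{1−d₁/2} · max(1, |a₂|)^{1−d₂/2} · |[a]/c|^{−d₃/2} · {a}^{d/2−1} d^×a ≤ C · min(1, |c|)^{min(d₁,d₂,d₃)/2 − 1 − ε}. (Lemma 9.8 of the paper, archimedean case F = ℝ.) -/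
open MeasureTheory

noncomputable section

/-- The product measure `d^×a₁ d^×a₂ d^×a₃` on `(ℝ^×)³`. -/
def mulHaar3 : Measure (ℝ × ℝ × ℝ) := mulHaar.prod (mulHaar.prod mulHaar)

/-!
Substituting `t = c / [a]`, the integrand becomes `‖M₃ (t, a₁ t, a₂ t, a₃ t)‖` times a product of
powers, and the Schwartz decay of `M₃` bounds it by a product of weights
`weight p q x = min 1 |x| ^ p * max 1 |x| ^ (-q)` at `a₁`, `a₂`, `c / (a₁ a₂)` and `c / [a]`.
Integrating out `a₃` costs a constant, by invariance of `d^×a` under `a ↦ w / a`. The `a₂`- and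
`a₁`-integrals are multiplicative convolutions of weights. Weights with nonnegative exponents are
supermultiplicative, so for `r ≤ p` and `s ≤ q`
`weight p q (x / a) * weight p' q' a ≤ weight r s x * weight (p' - r) (q' - s) a`,
and the last factor is integrable once `r < p'`: this strict inequality is where the `ε` is lost.
-/

open Set
open scoped ENNReal

lemma lintegral_mulHaar (f : ℝ → ℝ≥0∞) :
    ∫⁻ x, f x ∂mulHaar = ∫⁻ x in {0}ᶜ, ENNReal.ofReal |x|⁻¹ * f x := by
  rw [mulHaar, lintegral_withDensity_eq_lintegral_mul_non_measurable _ (by fun_prop)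
    (.of_forall fun _ => ENNReal.ofReal_lt_top), restrict_compl_singleton]
  rfl

lemma lintegral_mulHaar_comp_div (f : ℝ → ℝ≥0∞) {w : ℝ} (hw : w ≠ 0) :
    ∫⁻ x, f (w / x) ∂mulHaar = ∫⁻ x, f x ∂mulHaar := by
  have himage : (w / ·) '' {0}ᶜ = ({0}ᶜ : Set ℝ) := by
    refine Subset.antisymm ?_ fun y hy => ?_
    · rintro _ ⟨x, hx, rfl⟩
      exact div_ne_zero hw hx
    · exact ⟨w / y, div_ne_zero hw hy, div_div_cancel₀ hw⟩
  have hderiv : ∀ x ∈ ({0}ᶜ : Set ℝ), HasDerivWithinAt (w / ·) (-w / x ^ 2) {0}ᶜ x := by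
    intro x hx
    simpa [div_eq_mul_inv, neg_div] using ((hasDerivAt_inv hx).const_mul w).hasDerivWithinAt
  have hinj : InjOn (w / ·) ({0}ᶜ : Set ℝ) := fun x _ y _ h =>
    inv_injective (mul_left_cancel₀ hw h)
  rw [lintegral_mulHaar, lintegral_mulHaar]
  conv_rhs => rw [← himage, lintegral_image_eq_lintegral_abs_deriv_mul
    (measurableSet_singleton 0).compl hderiv hinj]
  refine setLIntegral_congr_fun (measurableSet_singleton 0).compl fun x (hx : x ≠ 0) => ?_
  rw [← mul_assoc, ← ENNReal.ofReal_mul (abs_nonneg _)]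
  congr 2
  rw [abs_div, abs_div, abs_neg, abs_pow]
  field_simp

instance : SFinite mulHaar := by unfold mulHaar; infer_instance

def weight (p q x : ℝ) : ℝ := min 1 |x| ^ p * max 1 |x| ^ (-q)

lemma min_one_abs_nonneg (x : ℝ) : 0 ≤ min 1 |x| := le_min zero_le_one (abs_nonneg x)

lemma one_le_max_one_abs (x : ℝ) : 1 ≤ max 1 |x| := le_max_left _ _

lemma max_one_abs_pos (x : ℝ) : 0 < max 1 |x| := one_pos.trans_le (one_le_max_one_abs x)

lemma min_one_abs_mul_max_one_abs (x : ℝ) : min 1 |x| * max 1 |x| = |x| := by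
  rw [min_mul_max, one_mul]

lemma min_one_abs_mul_le (x y : ℝ) : min 1 |x| * min 1 |y| ≤ min 1 |x * y| := by
  rw [abs_mul]
  exact le_min (mul_le_one₀ (min_le_left _ _) (min_one_abs_nonneg y) (min_le_left _ _))
    (mul_le_mul (min_le_right _ _) (min_le_right _ _) (min_one_abs_nonneg y) (abs_nonneg x))

lemma max_one_abs_mul_le (x y : ℝ) : max 1 |x * y| ≤ max 1 |x| * max 1 |y| := by
  rw [abs_mul]
  exact max_le (one_le_mul_of_one_le_of_one_le (one_le_max_one_abs x) (one_le_max_one_abs y))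
    (mul_le_mul (le_max_right _ _) (le_max_right _ _) (abs_nonneg y) (max_one_abs_pos x).le)

lemma max_one_abs_mul_min_one_abs_le (a t : ℝ) : max 1 |a| * min 1 |t| ≤ max 1 |a * t| := by
  rw [max_mul_of_nonneg _ _ (min_one_abs_nonneg t), one_mul, abs_mul]
  exact max_le_max (min_le_left _ _) (mul_le_mul_of_nonneg_left (min_le_right _ _) (abs_nonneg a))

lemma weight_nonneg (p q x : ℝ) : 0 ≤ weight p q x :=
  mul_nonneg (Real.rpow_nonneg (min_one_abs_nonneg x) _)
    (Real.rpow_nonneg (max_one_abs_pos x).le _)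

@[fun_prop]
lemma measurable_weight (p q : ℝ) : Measurable (weight p q) := by
  unfold weight; fun_prop

lemma weight_zero {p : ℝ} (hp : p ≠ 0) (q : ℝ) : weight p q 0 = 0 := by
  simp [weight, Real.zero_rpow hp]

lemma weight_le_weight {p q r s : ℝ} (hr : 0 ≤ r) (hrp : r ≤ p) (hsq : s ≤ q) (x : ℝ) :
    weight p q x ≤ weight r s x :=
  mul_le_mul (Real.rpow_le_rpow_of_exponent_ge' (min_one_abs_nonneg x) (min_le_left _ _) hr hrp)
    (Real.rpow_le_rpow_of_exponent_le (one_le_max_one_abs x) (neg_le_neg hsq))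
    (Real.rpow_nonneg (max_one_abs_pos x).le _) (Real.rpow_nonneg (min_one_abs_nonneg x) _)

lemma weight_add {x : ℝ} (hx : x ≠ 0) (p q p' q' : ℝ) :
    weight (p + p') (q + q') x = weight p q x * weight p' q' x := by
  have hmin : 0 < min 1 |x| := lt_min one_pos (abs_pos.2 hx)
  simp only [weight, neg_add, Real.rpow_add hmin, Real.rpow_add (max_one_abs_pos x)]
  ring

lemma weight_mul_weight_le_weight_mul {r s : ℝ} (hr : 0 ≤ r) (hs : 0 ≤ s) (x y : ℝ) :
    weight r s x * weight r s y ≤ weight r s (x * y) := by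
  calc weight r s x * weight r s y
      = (min 1 |x| * min 1 |y|) ^ r * (max 1 |x| * max 1 |y|) ^ (-s) := by
        rw [Real.mul_rpow (min_one_abs_nonneg x) (min_one_abs_nonneg y),
          Real.mul_rpow (max_one_abs_pos x).le (max_one_abs_pos y).le, weight, weight]
        ring
    _ ≤ weight r s (x * y) :=
        mul_le_mul (Real.rpow_le_rpow (mul_nonneg (min_one_abs_nonneg x) (min_one_abs_nonneg y))
            (min_one_abs_mul_le x y) hr)
          (Real.rpow_le_rpow_of_nonpos (max_one_abs_pos _) (max_one_abs_mul_le x y) (by linarith))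
          (Real.rpow_nonneg (mul_pos (max_one_abs_pos x) (max_one_abs_pos y)).le _)
          (Real.rpow_nonneg (min_one_abs_nonneg _) _)

lemma weight_div_mul_weight_le {p q p' q' r s : ℝ} (hr : 0 ≤ r) (hs : 0 ≤ s)
    (hrp : r ≤ p) (hsq : s ≤ q) (hrp' : r < p') (x a : ℝ) :
    weight p q (x / a) * weight p' q' a ≤ weight r s x * weight (p' - r) (q' - s) a := by
  rcases eq_or_ne a 0 with rfl | ha
  · rw [weight_zero (by linarith), mul_zero]
    exact mul_nonneg (weight_nonneg _ _ _) (weight_nonneg _ _ _)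
  calc weight p q (x / a) * weight p' q' a
      ≤ weight r s (x / a) * (weight r s a * weight (p' - r) (q' - s) a) := by
        rw [← weight_add ha, add_sub_cancel, add_sub_cancel]
        exact mul_le_mul_of_nonneg_right (weight_le_weight hr hrp hsq _) (weight_nonneg _ _ _)
    _ = weight r s (x / a) * weight r s a * weight (p' - r) (q' - s) a := by ring
    _ ≤ weight r s x * weight (p' - r) (q' - s) a := by
        refine mul_le_mul_of_nonneg_right ?_ (weight_nonneg _ _ _)
        simpa [div_mul_cancel₀ x ha] using weight_mul_weight_le_weight_mul hr hs (x / a) a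

lemma weight_neg_one_one (x : ℝ) : weight (-1) 1 x = |x|⁻¹ := by
  rw [weight, ← Real.mul_rpow (min_one_abs_nonneg x) (max_one_abs_pos x).le,
    min_one_abs_mul_max_one_abs, Real.rpow_neg_one]

lemma integrable_weight {a b : ℝ} (ha : -1 < a) (hb : 1 < b) : Integrable (weight a b) := by
  have hball : IntegrableOn (weight a b) (Metric.ball 0 1) := by
    refine integrableOn_ball_of_norm_le_rpow (C := 1) (α := -a) (by simp) (by simp; linarith)
      (ae_restrict_of_forall_mem measurableSet_ball fun x hx => ?_)
      (measurable_weight a b).aestronglyMeasurable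
    have hx : |x| < 1 := by simpa using hx
    simp [weight, min_eq_right hx.le, max_eq_left hx.le,
      abs_of_nonneg (Real.rpow_nonneg (abs_nonneg x) a)]
  have htail : IntegrableOn (weight a b) (Metric.ball 0 1)ᶜ := by
    refine (((integrable_one_add_norm (μ := volume) (r := b) (by simpa using hb)).const_mul
      (2 ^ b)).integrableOn).mono' (measurable_weight a b).aestronglyMeasurable
      (ae_restrict_of_forall_mem measurableSet_ball.compl fun x hx => ?_)
    have hx : 1 ≤ |x| := by simpa using hx
    have hxpos : 0 < |x| := one_pos.trans_le hx
    rw [Real.norm_eq_abs, abs_of_nonneg (weight_nonneg a b x), weight, min_eq_left hx,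
      max_eq_right hx, Real.one_rpow, one_mul, Real.norm_eq_abs]
    calc |x| ^ (-b) = 2 ^ b * (2 * |x|) ^ (-b) := by
          rw [Real.mul_rpow zero_le_two hxpos.le, ← mul_assoc, ← Real.rpow_add two_pos,
            add_neg_cancel, Real.rpow_zero, one_mul]
      _ ≤ 2 ^ b * (1 + |x|) ^ (-b) := mul_le_mul_of_nonneg_left
          (Real.rpow_le_rpow_of_nonpos (by positivity) (by linarith) (by linarith)) (by positivity)
  simpa using hball.union htail

lemma lintegral_weight_lt_top {p q : ℝ} (hp : 0 < p) (hq : 0 < q) :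
    ∫⁻ x, ENNReal.ofReal (weight p q x) ∂mulHaar < ∞ := by
  calc ∫⁻ x, ENNReal.ofReal (weight p q x) ∂mulHaar
      = ∫⁻ x in {0}ᶜ, ENNReal.ofReal (weight (-1 + p) (1 + q) x) := by
        rw [lintegral_mulHaar]
        refine setLIntegral_congr_fun (measurableSet_singleton 0).compl fun x (hx : x ≠ 0) => ?_
        rw [weight_add hx, weight_neg_one_one, ENNReal.ofReal_mul (inv_nonneg.2 (abs_nonneg x))]
    _ ≤ ∫⁻ x, ENNReal.ofReal (weight (-1 + p) (1 + q) x) := setLIntegral_le_lintegral _ _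
    _ < ∞ := (integrable_weight (by linarith) (by linarith)).lintegral_lt_top

lemma lintegral_weight_div_le {α : ℝ} (hα : α ≠ 0) (β w : ℝ) :
    ∫⁻ a, ENNReal.ofReal (weight α β (w / a)) ∂mulHaar
      ≤ ∫⁻ a, ENNReal.ofReal (weight α β a) ∂mulHaar := by
  rcases eq_or_ne w 0 with rfl | hw
  · simp [weight_zero hα]
  · exact (lintegral_mulHaar_comp_div (fun a => ENNReal.ofReal (weight α β a)) hw).le

lemma lintegral_weight_div_mul_weight_le {p q p' q' r s : ℝ} (hr : 0 ≤ r) (hs : 0 ≤ s)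
    (hrp : r ≤ p) (hsq : s ≤ q) (hrp' : r < p') (x : ℝ) :
    ∫⁻ a, ENNReal.ofReal (weight p q (x / a)) * ENNReal.ofReal (weight p' q' a) ∂mulHaar
      ≤ ENNReal.ofReal (weight r s x) *
          ∫⁻ a, ENNReal.ofReal (weight (p' - r) (q' - s) a) ∂mulHaar := by
  rw [← lintegral_const_mul' _ _ ENNReal.ofReal_ne_top]
  refine lintegral_mono fun a => ?_
  rw [← ENNReal.ofReal_mul (weight_nonneg _ _ _), ← ENNReal.ofReal_mul (weight_nonneg _ _ _)]
  exact ENNReal.ofReal_le_ofReal (weight_div_mul_weight_le hr hs hrp hsq hrp' x a)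

lemma exists_lintegral_mulHaar_prod_weight_le {p₂ p₃ q₂ q₃ α β r : ℝ} (hr : 0 ≤ r)
    (hr₂ : r < p₂) (hr₃ : r ≤ p₃) (hq₂ : 0 < q₂) (hq₃ : 0 ≤ q₃) (hα : 0 < α) (hβ : 0 < β) :
    ∃ K : ℝ≥0∞, K ≠ ∞ ∧ ∀ x : ℝ,
      ∫⁻ b, ENNReal.ofReal (weight p₂ q₂ b.1 * weight p₃ q₃ (x / b.1) *
          weight α β (x / b.1 / b.2)) ∂mulHaar.prod mulHaar
        ≤ K * ENNReal.ofReal (weight r 0 x) := by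
  set K₂ := ∫⁻ a, ENNReal.ofReal (weight (p₂ - r) q₂ a) ∂mulHaar
  set K₃ := ∫⁻ a, ENNReal.ofReal (weight α β a) ∂mulHaar
  have hK₂ : K₂ ≠ ∞ := (lintegral_weight_lt_top (by linarith) hq₂).ne
  have hK₃ : K₃ ≠ ∞ := (lintegral_weight_lt_top hα hβ).ne
  refine ⟨K₃ * K₂, ENNReal.mul_ne_top hK₃ hK₂, fun x => ?_⟩
  rw [lintegral_prod _ (by fun_prop)]
  calc ∫⁻ a₂, ∫⁻ a₃, ENNReal.ofReal (weight p₂ q₂ a₂ * weight p₃ q₃ (x / a₂) *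
          weight α β (x / a₂ / a₃)) ∂mulHaar ∂mulHaar
      ≤ ∫⁻ a₂, K₃ * (ENNReal.ofReal (weight p₃ q₃ (x / a₂)) *
          ENNReal.ofReal (weight p₂ q₂ a₂)) ∂mulHaar := by
        gcongr with a₂
        simp only [ENNReal.ofReal_mul', weight_nonneg]
        rw [lintegral_const_mul' _ _ (by finiteness), mul_comm,
          mul_comm (ENNReal.ofReal (weight p₂ q₂ a₂))]
        gcongr
        exact lintegral_weight_div_le hα.ne' β (x / a₂)
    _ ≤ K₃ * (ENNReal.ofReal (weight r 0 x) * K₂) := by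
        rw [lintegral_const_mul' _ _ hK₃]
        gcongr
        simpa only [sub_zero] using lintegral_weight_div_mul_weight_le hr le_rfl hr₃ hq₃ hr₂ x
    _ = K₃ * K₂ * ENNReal.ofReal (weight r 0 x) := by ring

lemma lintegral_mulHaar3_weight_le {p₁ p₂ p₃ q₁ q₂ q₃ α β r : ℝ} (hr : 0 ≤ r) (hr₁ : r < p₁)
    (hr₂ : r < p₂) (hr₃ : r ≤ p₃) (hq₁ : 0 < q₁) (hq₂ : 0 < q₂) (hq₃ : 0 ≤ q₃) (hα : 0 < α)
    (hβ : 0 < β) :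
    ∃ K : ℝ, 0 < K ∧ ∀ c : ℝ,
      ∫⁻ a, ENNReal.ofReal (weight p₁ q₁ a.1 * weight p₂ q₂ a.2.1 *
          weight p₃ q₃ (c / (a.1 * a.2.1)) * weight α β (c / (a.1 * a.2.1 * a.2.2))) ∂mulHaar3
        ≤ ENNReal.ofReal (K * min 1 |c| ^ r) := by
  obtain ⟨K, hK, hinner⟩ := exists_lintegral_mulHaar_prod_weight_le hr hr₂ hr₃ hq₂ hq₃ hα hβ
  set K₁ := ∫⁻ a, ENNReal.ofReal (weight (p₁ - r) q₁ a) ∂mulHaar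
  have hK₁ : K₁ ≠ ∞ := (lintegral_weight_lt_top (by linarith) hq₁).ne
  refine ⟨(K * K₁).toReal + 1, by positivity, fun c => ?_⟩
  calc ∫⁻ a, ENNReal.ofReal (weight p₁ q₁ a.1 * weight p₂ q₂ a.2.1 *
          weight p₃ q₃ (c / (a.1 * a.2.1)) * weight α β (c / (a.1 * a.2.1 * a.2.2))) ∂mulHaar3
      = ∫⁻ a₁, ENNReal.ofReal (weight p₁ q₁ a₁) * ∫⁻ b, ENNReal.ofReal (weight p₂ q₂ b.1 *
          weight p₃ q₃ (c / a₁ / b.1) * weight α β (c / a₁ / b.1 / b.2))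
          ∂mulHaar.prod mulHaar ∂mulHaar := by
        rw [mulHaar3, lintegral_prod _ (by fun_prop)]
        refine lintegral_congr fun a₁ => ?_
        rw [← lintegral_const_mul' _ _ ENNReal.ofReal_ne_top]
        refine lintegral_congr fun b => ?_
        rw [← ENNReal.ofReal_mul (weight_nonneg _ _ _)]
        simp only [div_div, mul_assoc]
    _ ≤ ∫⁻ a₁, ENNReal.ofReal (weight p₁ q₁ a₁) *
          (K * ENNReal.ofReal (weight r 0 (c / a₁))) ∂mulHaar := by
        gcongr with a₁
        exact hinner (c / a₁)
    _ = K * ∫⁻ a₁, ENNReal.ofReal (weight r 0 (c / a₁)) *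
          ENNReal.ofReal (weight p₁ q₁ a₁) ∂mulHaar := by
        rw [← lintegral_const_mul' _ _ hK]
        refine lintegral_congr fun a₁ => ?_
        ring
    _ ≤ K * (ENNReal.ofReal (weight r 0 c) * K₁) := by
        gcongr
        simpa only [sub_zero] using
          lintegral_weight_div_mul_weight_le hr le_rfl le_rfl le_rfl hr₁ c
    _ = K * K₁ * ENNReal.ofReal (min 1 |c| ^ r) := by
        rw [weight, neg_zero, Real.rpow_zero, mul_one]
        ring
    _ ≤ ENNReal.ofReal ((K * K₁).toReal + 1) * ENNReal.ofReal (min 1 |c| ^ r) := by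
        gcongr
        rw [ENNReal.ofReal_add ENNReal.toReal_nonneg zero_le_one,
          ENNReal.ofReal_toReal (by finiteness)]
        exact le_self_add
    _ = ENNReal.ofReal (((K * K₁).toReal + 1) * min 1 |c| ^ r) :=
        (ENNReal.ofReal_mul (by positivity)).symm

lemma min_one_abs_div_rpow_le {a t B q : ℝ} (hB : max 1 |a * t| ≤ B) (hq : 0 ≤ q) :
    (min 1 |t| / B) ^ q ≤ max 1 |a| ^ (-q) := by
  have hB₀ : 0 < B := (max_one_abs_pos _).trans_le hB
  rw [Real.rpow_neg (max_one_abs_pos a).le, ← Real.inv_rpow (max_one_abs_pos a).le]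
  refine Real.rpow_le_rpow (div_nonneg (min_one_abs_nonneg t) hB₀.le) ?_ hq
  rw [div_le_iff₀ hB₀, inv_mul_eq_div, le_div_iff₀ (max_one_abs_pos a), mul_comm]
  exact (max_one_abs_mul_min_one_abs_le a t).trans hB

/-- In `|t| = min 1 |t| * max 1 |t|`, the single factor `min 1 |t|` is shared out as `4⁻¹` to pay
for the decay in `a₁`, `4⁻¹` for the decay in `a₂`, and `2⁻¹` for the weight in `t`. -/
lemma abs_le_rpow_mul_weight {a₁ a₂ t B : ℝ} (h₁ : max 1 |a₁ * t| ≤ B) (h₂ : max 1 |a₂ * t| ≤ B)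
    (ht : max 1 |t| ≤ B) :
    |t| ≤ B ^ (2 : ℝ) * (max 1 |a₁| ^ (-4⁻¹ : ℝ) * max 1 |a₂| ^ (-4⁻¹ : ℝ) *
      weight 2⁻¹ 2⁻¹ t) := by
  have hB : 0 < B := (max_one_abs_pos t).trans_le ht
  set m := min 1 |t|
  set M := max 1 |t|
  have hm : 0 ≤ m := min_one_abs_nonneg t
  have hM : 0 < M := max_one_abs_pos t
  calc |t| = m * M ^ (3 / 2 : ℝ) * M ^ (-2⁻¹ : ℝ) := by
        rw [mul_assoc, ← Real.rpow_add hM]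
        norm_num [m, M, min_one_abs_mul_max_one_abs]
    _ ≤ m * B ^ (3 / 2 : ℝ) * M ^ (-2⁻¹ : ℝ) := by gcongr
    _ = B ^ (2 : ℝ) * ((m / B) ^ (4⁻¹ : ℝ) * (m / B) ^ (4⁻¹ : ℝ) * weight 2⁻¹ 2⁻¹ t) := by
        have hm_sq : m = m ^ (2⁻¹ : ℝ) * m ^ (2⁻¹ : ℝ) := by
          rw [← Real.rpow_add' hm (by norm_num)]
          norm_num
        have hB_pow : B ^ (3 / 2 : ℝ) = B ^ (2 : ℝ) / B ^ (2⁻¹ : ℝ) := by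
          rw [← Real.rpow_sub hB]
          norm_num
        rw [← Real.rpow_add' (by positivity) (by norm_num), Real.div_rpow hm hB.le, hB_pow,
          show weight 2⁻¹ 2⁻¹ t = m ^ (2⁻¹ : ℝ) * M ^ (-2⁻¹ : ℝ) from rfl]
        conv_lhs => rw [hm_sq]
        norm_num
        field_simp
    _ ≤ B ^ (2 : ℝ) * (max 1 |a₁| ^ (-4⁻¹ : ℝ) * max 1 |a₂| ^ (-4⁻¹ : ℝ) *
          weight 2⁻¹ 2⁻¹ t) := by
        gcongr B ^ _ * (?_ * ?_ * _)
        · exact weight_nonneg _ _ _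
        · exact min_one_abs_div_rpow_le h₁ (by norm_num)
        · exact min_one_abs_div_rpow_le h₂ (by norm_num)

lemma max_one_abs_rpow_neg_mul_abs_rpow (a p : ℝ) :
    max 1 |a| ^ (-p) * |a| ^ p = min 1 |a| ^ p := by
  calc max 1 |a| ^ (-p) * |a| ^ p = max 1 |a| ^ (-p) * (min 1 |a| * max 1 |a|) ^ p := by
        rw [min_one_abs_mul_max_one_abs]
    _ = min 1 |a| ^ p := by
        rw [Real.mul_rpow (min_one_abs_nonneg a) (max_one_abs_pos a).le, mul_left_comm,
          ← Real.rpow_add (max_one_abs_pos a), neg_add_cancel, Real.rpow_zero, mul_one]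

lemma abs_rpow_le_rpow_mul_weight {y B p : ℝ} (hB : max 1 |y| ≤ B) (hp : 0 ≤ p) :
    |y| ^ p ≤ B ^ p * weight p 0 y := by
  calc |y| ^ p = min 1 |y| ^ p * max 1 |y| ^ p := by
        rw [← Real.mul_rpow (min_one_abs_nonneg y) (max_one_abs_pos y).le,
          min_one_abs_mul_max_one_abs]
    _ ≤ B ^ p * weight p 0 y := by
        rw [weight, neg_zero, Real.rpow_zero, mul_one, mul_comm]
        gcongr

lemma integrand_le_rpow_mul_weight {a₁ a₂ a₃ t B p₁ p₂ p₃ : ℝ} (hp₃ : 0 ≤ p₃)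
    (h₁ : max 1 |a₁ * t| ≤ B) (h₂ : max 1 |a₂ * t| ≤ B) (h₃ : max 1 |a₃ * t| ≤ B)
    (ht : max 1 |t| ≤ B) :
    max 1 |a₁| ^ (-p₁) * max 1 |a₂| ^ (-p₂) * |t| ^ (p₃ + 1) *
        (|a₁| ^ p₁ * |a₂| ^ p₂ * |a₃| ^ p₃)
      ≤ B ^ (p₃ + 2) * (weight p₁ 4⁻¹ a₁ * weight p₂ 4⁻¹ a₂ * weight p₃ 0 (a₃ * t) *
          weight 2⁻¹ 2⁻¹ t) := by
  have hB : 0 < B := (max_one_abs_pos t).trans_le ht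
  calc max 1 |a₁| ^ (-p₁) * max 1 |a₂| ^ (-p₂) * |t| ^ (p₃ + 1) *
        (|a₁| ^ p₁ * |a₂| ^ p₂ * |a₃| ^ p₃)
      = (max 1 |a₁| ^ (-p₁) * |a₁| ^ p₁) * (max 1 |a₂| ^ (-p₂) * |a₂| ^ p₂) *
          (|t| * |a₃ * t| ^ p₃) := by
        rw [Real.rpow_add_one' (abs_nonneg t) (by linarith), abs_mul,
          Real.mul_rpow (abs_nonneg a₃) (abs_nonneg t)]
        ring
    _ ≤ min 1 |a₁| ^ p₁ * min 1 |a₂| ^ p₂ *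
          (B ^ (2 : ℝ) * (max 1 |a₁| ^ (-4⁻¹ : ℝ) * max 1 |a₂| ^ (-4⁻¹ : ℝ) * weight 2⁻¹ 2⁻¹ t) *
            (B ^ p₃ * weight p₃ 0 (a₃ * t))) := by
        rw [max_one_abs_rpow_neg_mul_abs_rpow, max_one_abs_rpow_neg_mul_abs_rpow]
        refine mul_le_mul_of_nonneg_left (mul_le_mul (abs_le_rpow_mul_weight h₁ h₂ ht)
          (abs_rpow_le_rpow_mul_weight h₃ hp₃) (by positivity) ?_) (by positivity)
        exact mul_nonneg (by positivity) (mul_nonneg (by positivity) (weight_nonneg _ _ _))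
    _ = B ^ (p₃ + 2) * (weight p₁ 4⁻¹ a₁ * weight p₂ 4⁻¹ a₂ * weight p₃ 0 (a₃ * t) *
          weight 2⁻¹ 2⁻¹ t) := by
        rw [Real.rpow_add hB]
        simp only [weight]
        ring

def integrand (d₁ d₂ d₃ : ℕ) (M₃ : SchwartzMap (ℝ × ℝ × ℝ × ℝ) ℂ) (c : ℝ) (a : ℝ × ℝ × ℝ) : ℝ :=
  ‖M₃ (c / (a.1 * a.2.1 * a.2.2), a.1 * c / (a.1 * a.2.1 * a.2.2),
      a.2.1 * c / (a.1 * a.2.1 * a.2.2), a.2.2 * c / (a.1 * a.2.1 * a.2.2))‖ *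
    max 1 |a.1| ^ (1 - (d₁ : ℝ) / 2) * max 1 |a.2.1| ^ (1 - (d₂ : ℝ) / 2) *
    |a.1 * a.2.1 * a.2.2 / c| ^ (-(d₃ : ℝ) / 2) *
    (|a.1| ^ ((d₁ : ℝ) / 2 - 1) * |a.2.1| ^ ((d₂ : ℝ) / 2 - 1) * |a.2.2| ^ ((d₃ : ℝ) / 2 - 1))

lemma SchwartzMap.exists_one_add_norm_pow_mul_le {E F : Type*} [NormedAddCommGroup E]
    [NormedSpace ℝ E] [NormedAddCommGroup F] [NormedSpace ℝ F] (f : SchwartzMap E F) (k : ℕ) :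
    ∃ C : ℝ, 0 ≤ C ∧ ∀ x, (1 + ‖x‖) ^ k * ‖f x‖ ≤ C := by
  have hdecay (x : E) := f.one_add_le_sup_seminorm_apply (𝕜 := ℝ) (m := (k, 0)) le_rfl le_rfl x
  simp only [norm_iteratedFDeriv_zero] at hdecay
  exact ⟨_, (mul_nonneg (by positivity) (norm_nonneg _)).trans (hdecay 0), hdecay⟩

lemma max_one_abs_le_one_add_norm {E : Type*} [SeminormedAddCommGroup E] {u : ℝ} {x : E}
    (h : |u| ≤ ‖x‖) : max 1 |u| ≤ 1 + ‖x‖ :=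
  max_le (by linarith [norm_nonneg x]) (by linarith)

lemma integrand_eq (d₁ d₂ d₃ : ℕ) (M₃ : SchwartzMap (ℝ × ℝ × ℝ × ℝ) ℂ) {c a₁ a₂ a₃ t : ℝ}
    (ht : c / (a₁ * a₂ * a₃) = t) :
    integrand d₁ d₂ d₃ M₃ c (a₁, a₂, a₃) = ‖M₃ (t, a₁ * t, a₂ * t, a₃ * t)‖ *
      (max 1 |a₁| ^ (-((d₁ : ℝ) / 2 - 1)) * max 1 |a₂| ^ (-((d₂ : ℝ) / 2 - 1)) *
        |t| ^ ((d₃ : ℝ) / 2 - 1 + 1) *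
        (|a₁| ^ ((d₁ : ℝ) / 2 - 1) * |a₂| ^ ((d₂ : ℝ) / 2 - 1) * |a₃| ^ ((d₃ : ℝ) / 2 - 1))) := by
  have hpow : |a₁ * a₂ * a₃ / c| ^ (-(d₃ : ℝ) / 2) = |t| ^ ((d₃ : ℝ) / 2 - 1 + 1) := by
    rw [← ht, ← inv_div, abs_inv, Real.inv_rpow (abs_nonneg _), ← Real.rpow_neg (abs_nonneg _)]
    congr 1
    ring
  have hexp (d : ℕ) : 1 - (d : ℝ) / 2 = -((d : ℝ) / 2 - 1) := by ring
  simp only [integrand]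
  rw [hpow, hexp, hexp, mul_div_assoc, mul_div_assoc, mul_div_assoc, ht]
  ring

lemma exists_integrand_le_weight {d₁ d₂ d₃ : ℕ} (hd₃ : 2 ≤ d₃)
    (M₃ : SchwartzMap (ℝ × ℝ × ℝ × ℝ) ℂ) :
    ∃ C : ℝ, 0 ≤ C ∧ ∀ c a₁ a₂ a₃ : ℝ,
      integrand d₁ d₂ d₃ M₃ c (a₁, a₂, a₃)
        ≤ C * (weight ((d₁ : ℝ) / 2 - 1) 4⁻¹ a₁ * weight ((d₂ : ℝ) / 2 - 1) 4⁻¹ a₂ *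
            weight ((d₃ : ℝ) / 2 - 1) 0 (c / (a₁ * a₂)) *
            weight 2⁻¹ 2⁻¹ (c / (a₁ * a₂ * a₃))) := by
  have hd₃' : (2 : ℝ) ≤ d₃ := by exact_mod_cast hd₃
  obtain ⟨C, hC, hdecay⟩ := M₃.exists_one_add_norm_pow_mul_le d₃
  refine ⟨C, hC, fun c a₁ a₂ a₃ => ?_⟩
  have hW : 0 ≤ weight ((d₁ : ℝ) / 2 - 1) 4⁻¹ a₁ * weight ((d₂ : ℝ) / 2 - 1) 4⁻¹ a₂ *
      weight ((d₃ : ℝ) / 2 - 1) 0 (c / (a₁ * a₂)) * weight 2⁻¹ 2⁻¹ (c / (a₁ * a₂ * a₃)) :=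
    mul_nonneg (mul_nonneg (mul_nonneg (weight_nonneg _ _ _) (weight_nonneg _ _ _))
      (weight_nonneg _ _ _)) (weight_nonneg _ _ _)
  set t := c / (a₁ * a₂ * a₃) with ht
  rw [integrand_eq d₁ d₂ d₃ M₃ ht.symm]
  rcases eq_or_ne a₃ 0 with rfl | ha₃
  · -- `c / 0 = 0`, so `t = 0` and the factor `|t| ^ (d₃ / 2)` vanishes
    have ht₀ : t = 0 := by simp [ht]
    refine le_of_eq_of_le ?_ (mul_nonneg hC hW)
    rw [ht₀, abs_zero, Real.zero_rpow (by linarith)]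
    simp
  have hc : c / (a₁ * a₂) = a₃ * t := by
    rw [ht, mul_div_assoc', mul_comm a₃ c, mul_div_mul_right c (a₁ * a₂) ha₃]
  rw [hc] at hW ⊢
  set x : ℝ × ℝ × ℝ × ℝ := (t, a₁ * t, a₂ * t, a₃ * t)
  have hcore := integrand_le_rpow_mul_weight (p₁ := (d₁ : ℝ) / 2 - 1) (p₂ := (d₂ : ℝ) / 2 - 1)
    (by linarith : (0 : ℝ) ≤ (d₃ : ℝ) / 2 - 1)
    (max_one_abs_le_one_add_norm ((norm_fst_le x.2).trans (norm_snd_le x)))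
    (max_one_abs_le_one_add_norm
      ((norm_fst_le x.2.2).trans ((norm_snd_le x.2).trans (norm_snd_le x))))
    (max_one_abs_le_one_add_norm
      ((norm_snd_le x.2.2).trans ((norm_snd_le x.2).trans (norm_snd_le x))))
    (max_one_abs_le_one_add_norm (norm_fst_le x))
  have hpow : (1 + ‖x‖) ^ ((d₃ : ℝ) / 2 - 1 + 2) ≤ (1 + ‖x‖) ^ d₃ := by
    rw [← Real.rpow_natCast]
    exact Real.rpow_le_rpow_of_exponent_le (by linarith [norm_nonneg x]) (by linarith)
  refine (mul_le_mul_of_nonneg_left hcore (norm_nonneg _)).trans ?_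
  rw [← mul_assoc, mul_comm ‖M₃ x‖]
  exact mul_le_mul_of_nonneg_right
    ((mul_le_mul_of_nonneg_right hpow (norm_nonneg _)).trans (hdecay x)) hW

lemma exists_lintegral_integrand_le {d₁ d₂ d₃ : ℕ} (hd₃ : 2 ≤ d₃)
    (M₃ : SchwartzMap (ℝ × ℝ × ℝ × ℝ) ℂ) {r : ℝ} (hr : 0 ≤ r) (hr₁ : r < (d₁ : ℝ) / 2 - 1)
    (hr₂ : r < (d₂ : ℝ) / 2 - 1) (hr₃ : r ≤ (d₃ : ℝ) / 2 - 1) :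
    ∃ C : ℝ, 0 < C ∧ ∀ c : ℝ,
      ∫⁻ a, ENNReal.ofReal (integrand d₁ d₂ d₃ M₃ c a) ∂mulHaar3
        ≤ ENNReal.ofReal (C * min 1 |c| ^ r) := by
  obtain ⟨C₀, hC₀, hpoint⟩ := exists_integrand_le_weight (d₁ := d₁) (d₂ := d₂) hd₃ M₃
  obtain ⟨K, hK, hint⟩ := lintegral_mulHaar3_weight_le (q₁ := 4⁻¹) (q₂ := 4⁻¹) (q₃ := 0)
    (α := 2⁻¹) (β := 2⁻¹) hr hr₁ hr₂ hr₃ (by norm_num) (by norm_num) le_rfl (by norm_num)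
    (by norm_num)
  refine ⟨(C₀ + 1) * K, by positivity, fun c => ?_⟩
  calc ∫⁻ a, ENNReal.ofReal (integrand d₁ d₂ d₃ M₃ c a) ∂mulHaar3
      ≤ ∫⁻ a, ENNReal.ofReal C₀ * ENNReal.ofReal
          (weight ((d₁ : ℝ) / 2 - 1) 4⁻¹ a.1 * weight ((d₂ : ℝ) / 2 - 1) 4⁻¹ a.2.1 *
            weight ((d₃ : ℝ) / 2 - 1) 0 (c / (a.1 * a.2.1)) *
            weight 2⁻¹ 2⁻¹ (c / (a.1 * a.2.1 * a.2.2))) ∂mulHaar3 := by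
        refine lintegral_mono fun a => ?_
        rw [← ENNReal.ofReal_mul hC₀]
        exact ENNReal.ofReal_le_ofReal (hpoint c a.1 a.2.1 a.2.2)
    _ ≤ ENNReal.ofReal C₀ * ENNReal.ofReal (K * min 1 |c| ^ r) := by
        rw [lintegral_const_mul' _ _ ENNReal.ofReal_ne_top]
        gcongr
        exact hint c
    _ ≤ ENNReal.ofReal ((C₀ + 1) * K * min 1 |c| ^ r) := by
        rw [← ENNReal.ofReal_mul hC₀, ← mul_assoc]
        gcongr
        linarith

theorem stmt12_general
    (d₁ d₂ d₃ : ℕ)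
    (hd₁ : 4 ≤ d₁) (hd₂ : 4 ≤ d₂) (hd₃ : 4 ≤ d₃)
    (ε : ℝ) (hε0 : 0 < ε) (hε : ε < 1 / 2)
    (M₃ : SchwartzMap (ℝ × ℝ × ℝ × ℝ) ℂ) :
    ∃ C : ℝ, 0 < C ∧
      ∀ c : ℝ, c ≠ 0 →
        (∫⁻ a : ℝ × ℝ × ℝ, ENNReal.ofReal
            (‖M₃ (c / (a.1 * a.2.1 * a.2.2), a.1 * c / (a.1 * a.2.1 * a.2.2),
                a.2.1 * c / (a.1 * a.2.1 * a.2.2), a.2.2 * c / (a.1 * a.2.1 * a.2.2))‖ *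
              max 1 |a.1| ^ (1 - (d₁ : ℝ) / 2) *
              max 1 |a.2.1| ^ (1 - (d₂ : ℝ) / 2) *
              |a.1 * a.2.1 * a.2.2 / c| ^ (-(d₃ : ℝ) / 2) *
              (|a.1| ^ ((d₁ : ℝ) / 2 - 1) * |a.2.1| ^ ((d₂ : ℝ) / 2 - 1) *
                |a.2.2| ^ ((d₃ : ℝ) / 2 - 1))) ∂mulHaar3)
        ≤ ENNReal.ofReal
            (C * min 1 |c| ^ ((min d₁ (min d₂ d₃) : ℝ) / 2 - 1 - ε)) := by
  have h₁ : (4 : ℝ) ≤ d₁ := by exact_mod_cast hd₁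
  have h₂ : (4 : ℝ) ≤ d₂ := by exact_mod_cast hd₂
  have h₃ : (4 : ℝ) ≤ d₃ := by exact_mod_cast hd₃
  have hmin₁ : (min d₁ (min d₂ d₃) : ℝ) ≤ d₁ := min_le_left _ _
  have hmin₂ : (min d₁ (min d₂ d₃) : ℝ) ≤ d₂ := (min_le_right _ _).trans (min_le_left _ _)
  have hmin₃ : (min d₁ (min d₂ d₃) : ℝ) ≤ d₃ := (min_le_right _ _).trans (min_le_right _ _)
  have hmin : (4 : ℝ) ≤ min (d₁ : ℝ) (min (d₂ : ℝ) d₃) := le_min h₁ (le_min h₂ h₃)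
  obtain ⟨C, hC, hbound⟩ := exists_lintegral_integrand_le (d₁ := d₁) (d₂ := d₂) (d₃ := d₃)
    (by omega) M₃ (r := (min d₁ (min d₂ d₃) : ℝ) / 2 - 1 - ε) (by linarith) (by linarith)
    (by linarith) (by linarith)
  exact ⟨C, hC, fun c _ => hbound c⟩

/-- Lemma 9.8 (archimedean case `F = ℝ`). -/
theorem stmt12
    (d₁ d₂ d₃ : ℕ) (hd₁e : Even d₁) (hd₂e : Even d₂) (hd₃e : Even d₃)
    (hd₁ : 4 ≤ d₁) (hd₂ : 4 ≤ d₂) (hd₃ : 4 ≤ d₃)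
    (ε : ℝ) (hε0 : 0 < ε) (hε : ε < 1 / 2)
    (M₃ : SchwartzMap (ℝ × ℝ × ℝ × ℝ) ℂ) :
    ∃ C : ℝ, 0 < C ∧
      ∀ c : ℝ, c ≠ 0 →
        (∫⁻ a : ℝ × ℝ × ℝ, ENNReal.ofReal
            (‖M₃ (c / (a.1 * a.2.1 * a.2.2), a.1 * c / (a.1 * a.2.1 * a.2.2),
                a.2.1 * c / (a.1 * a.2.1 * a.2.2), a.2.2 * c / (a.1 * a.2.1 * a.2.2))‖ *
              max 1 |a.1| ^ (1 - (d₁ : ℝ) / 2) *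
              max 1 |a.2.1| ^ (1 - (d₂ : ℝ) / 2) *
              |a.1 * a.2.1 * a.2.2 / c| ^ (-(d₃ : ℝ) / 2) *
              (|a.1| ^ ((d₁ : ℝ) / 2 - 1) * |a.2.1| ^ ((d₂ : ℝ) / 2 - 1) *
                |a.2.2| ^ ((d₃ : ℝ) / 2 - 1))) ∂mulHaar3)
        ≤ ENNReal.ofReal
            (C * min 1 |c| ^ ((min d₁ (min d₂ d₃) : ℝ) / 2 - 1 - ε)) :=
  stmt12_general d₁ d₂ d₃ hd₁ hd₂ hd₃ ε hε0 hε M₃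
end
end
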